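/- arXiv:2306.03266 — 5 statements merged into one kernel-verified Lean document; each statement's English description precedes it below -/
import Mathlib

section
/- Let k ≥ 2, t ≥ 1 and let G be a colored graph. For any v₁, v₂ ∈ V(G)^k, if the stable (k,t)-FWL colors satisfy C^∞_{ktfwl}(v₁) = C^∞_{ktfwl}(v₂), then for all i, j ∈ [k], SPD(v_{1i}, v_{1j}) = SPD(v_{2i}, v_{2j}), i.e., the stable (k,t)-FWL color of a k-tuple determines all pairwise shortest-path distances within the tuple. -/
/-!
Common formalization of colored graphs, the k-dimensional Weisfeiler-Lehman (WL) test,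
the (k,t)-dimensional Folklore WL test (k,t)-FWL and its extension (k,t)-FWL+, together
with the various specific refinement procedures (δ-k-LWL, GraphSNN, edge-based subgraph
refinement, KP-GNN, GDGNN, SLFWL(2), N²-FWL).

Convention: all colorings are formalized as explicitly-valued nested data (an injective
HASH is the identity).  "The stable colors (resp. color histograms) are equal" is rendered
as "the colors (resp. color histograms) at every iteration l are equal"; since the colors
at iteration l determine those at every earlier iteration and the partitions stabilize on
finite graphs, this is equivalent to equality of the stable colors.
-/

open Finset

noncomputable section

/-- A finite colored, undirected, simple graph. -/
structure ColoredGraph (C : Type) where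
  V : Type
  fintypeV : Fintype V
  decEqV : DecidableEq V
  adj : V → V → Prop
  symm : ∀ u v, adj u v → adj v u
  loopless : ∀ v, ¬ adj v v
  color : V → C

attribute [instance] ColoredGraph.fintypeV ColoredGraph.decEqV

/-- The data recording the isomorphism type of a `k`-tuple of vertices: the colors of the
entries, the equalities among entries, and the adjacencies among entries. -/
abbrev IsoType (C : Type) (k : ℕ) : Type :=
  (Fin k → C) × (Fin k → Fin k → Prop) × (Fin k → Fin k → Prop)

namespace ColoredGraph

variable {C : Type}

/-- The isomorphism type of a `k`-tuple of vertices.  Two tuples (possibly in different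
graphs) have the same isomorphism type iff these values are equal. -/
def isoType (G : ColoredGraph C) {k : ℕ} (v : Fin k → G.V) : IsoType C k :=
  (fun i => G.color (v i), fun i j => v i = v j, fun i j => G.adj (v i) (v j))

/-- The underlying simple graph. -/
def toSimple (G : ColoredGraph C) : SimpleGraph G.V where
  Adj := G.adj
  symm := ⟨fun u v h => G.symm u v h⟩
  loopless := ⟨fun v h => G.loopless v h⟩

/-- `Q₁(v)`: the set of neighbors of `v`. -/
def nbhd (G : ColoredGraph C) (v : G.V) : Finset G.V :=
  @Finset.filter _ (fun u => G.adj v u) (Classical.decPred _) Finset.univ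

/-- `N₁(v)`: the closed neighborhood of `v`. -/
def closedNbhd (G : ColoredGraph C) (v : G.V) : Finset G.V :=
  @Finset.filter _ (fun u => u = v ∨ G.adj v u) (Classical.decPred _) Finset.univ

/-- `N_h(v)`: the set of vertices within `h` hops of `v` (including `v`). -/
def ball (G : ColoredGraph C) (h : ℕ) (v : G.V) : Finset G.V :=
  @Finset.filter _ (fun u => ∃ p : G.toSimple.Walk v u, p.length ≤ h)
    (Classical.decPred _) Finset.univ

/-- `Q_d(v)`: the set of vertices at shortest-path distance exactly `d` from `v`. -/
def sphere (G : ColoredGraph C) (d : ℕ) (v : G.V) : Finset G.V :=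
  @Finset.filter _ (fun u => G.toSimple.Reachable v u ∧ G.toSimple.dist v u = d)
    (Classical.decPred _) Finset.univ

/-- `SP(v₁,v₂)`: the set of vertices lying on shortest paths between `v₁` and `v₂`
(with `SP(v,v) = {v}`). -/
def spSet (G : ColoredGraph C) (v₁ v₂ : G.V) : Finset G.V :=
  if v₁ = v₂ then {v₁}
  else
    @Finset.filter _
      (fun w => G.toSimple.Reachable v₁ w ∧ G.toSimple.Reachable w v₂ ∧
        G.toSimple.dist v₁ w + G.toSimple.dist w v₂ = G.toSimple.dist v₁ v₂)
      (Classical.decPred _) Finset.univ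

/-- Isomorphism of colored graphs. -/
def Isomorphic (G H : ColoredGraph C) : Prop :=
  ∃ φ : G.V ≃ H.V,
    (∀ u v : G.V, G.adj u v ↔ H.adj (φ u) (φ v)) ∧ ∀ v : G.V, H.color (φ v) = G.color v

end ColoredGraph

variable {C : Type}

/-- The type of `t`-fold nested (hierarchical) multisets over `α`. -/
def HMS (α : Type) : ℕ → Type
  | 0 => α
  | t + 1 => Multiset (HMS α t)

/-- The hierarchical multiset `{{x(w) : w ∈ S₁ × … × S_t}}_t`, grouped so that the
innermost multiset ranges over the first coordinate and the outermost over the last. -/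
def hms {V α : Type} : (t : ℕ) → (Fin t → Finset V) → ((Fin t → V) → α) → HMS α t
  | 0, _, x => x finZeroElim
  | t + 1, S, x =>
      (S (Fin.last t)).val.map fun wl =>
        hms t (fun i => S i.castSucc) fun w => x (Fin.snoc w wl)

/-- Replace the entries of `v` at the given indices by the given values. -/
def replaceList {V : Type} {k : ℕ} (v : Fin k → V) : List (Fin k × V) → (Fin k → V)
  | [] => v
  | p :: ps => Function.update (replaceList v ps) p.1 p.2

/-- The neighborhood tuple `Q^F_w(v)` of a `k`-tuple `v` with respect to a `t`-tuple `w`: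
for each `m = 0, 1, …, min k t`, every `m`-subtuple of `w` (index sets in the fixed order
given by `List.sublistsLen`) is substituted into `v` at every increasing tuple of `m`
positions (in the fixed order given by `List.sublistsLen`), and all resulting `k`-tuples
are concatenated in this fixed order (for `m = 0` this contributes `v` itself). -/
def nbhdTuple {V : Type} (k t : ℕ) (v : Fin k → V) (w : Fin t → V) : List (Fin k → V) :=
  (List.range (min k t + 1)).flatMap fun m =>
    ((List.finRange t).sublistsLen m).flatMap fun ws =>
      ((List.finRange k).sublistsLen m).map fun js =>
        replaceList v (js.zip (ws.map w))

/-! ### The k-WL colorings -/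

/-- The type of `k`-WL colors at iteration `l`. -/
def WLColor (C : Type) (k : ℕ) : ℕ → Type
  | 0 => IsoType C k
  | l + 1 => WLColor C k l × (Fin k → Multiset (WLColor C k l))

/-- The `k`-WL coloring of `k`-tuples at iteration `l`. -/
def wlColor (G : ColoredGraph C) (k : ℕ) : (l : ℕ) → (Fin k → G.V) → WLColor C k l
  | 0, v => G.isoType v
  | l + 1, v =>
      (wlColor G k l v,
        fun j => Finset.univ.val.map fun w => wlColor G k l (Function.update v j w))

/-- The `k`-WL color histogram of `G` at iteration `l`. -/
def wlHistogram (G : ColoredGraph C) (k l : ℕ) : Multiset (WLColor C k l) :=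
  Finset.univ.val.map fun v => wlColor G k l v

/-! ### The (k,t)-FWL and (k,t)-FWL+ colorings -/

/-- The type of `(k,t)`-FWL(+) colors at iteration `l` (hierarchical multiset version). -/
def FWLColor (C : Type) (k t : ℕ) : ℕ → Type
  | 0 => IsoType C k
  | l + 1 => FWLColor C k t l × HMS (List (FWLColor C k t l)) t

/-- The `(k,t)`-FWL+ coloring with the equivariant set `ES` given coordinatewise
(so that `w` ranges over `ES v 0 × … × ES v (t-1)`, aggregated hierarchically). -/
def fwlpColor (G : ColoredGraph C) (k t : ℕ) (ES : (Fin k → G.V) → Fin t → Finset G.V) :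
    (l : ℕ) → (Fin k → G.V) → FWLColor C k t l
  | 0, v => G.isoType v
  | l + 1, v =>
      (fwlpColor G k t ES l v,
        hms t (ES v) fun w => (nbhdTuple k t v w).map fun u => fwlpColor G k t ES l u)

/-- The `(k,t)`-FWL coloring (all coordinates of `w` range over all vertices). -/
def fwlColor (G : ColoredGraph C) (k t : ℕ) : (l : ℕ) → (Fin k → G.V) → FWLColor C k t l :=
  fwlpColor G k t fun _ _ => Finset.univ

/-- The `(k,t)`-FWL color histogram of `G` at iteration `l`. -/
def fwlHistogram (G : ColoredGraph C) (k t l : ℕ) : Multiset (FWLColor C k t l) :=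
  Finset.univ.val.map fun v => fwlColor G k t l v

/-- The extended `(k,t)`-FWL color of a `(k+t)`-tuple `p = (v, w)`:
`C^{l+1}(p) = (C^l(u) : u ∈ Q^F_w(v))`, recorded here at level `l`. -/
def fwlExtColor (G : ColoredGraph C) (k t l : ℕ) (v : Fin k → G.V) (w : Fin t → G.V) :
    List (FWLColor C k t l) :=
  (nbhdTuple k t v w).map fun u => fwlColor G k t l u

/-- The type of `(k,t)`-FWL+ colors at iteration `l` (plain multiset version). -/
def FWLPlainColor (C : Type) (k : ℕ) : ℕ → Type
  | 0 => IsoType C k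
  | l + 1 => FWLPlainColor C k l × Multiset (List (FWLPlainColor C k l))

/-- The `(k,t)`-FWL+ coloring with equivariant set `ES` given coordinatewise, aggregated
as a plain multiset over `ES v 0 × … × ES v (t-1)`. -/
def fwlpPlainColor (G : ColoredGraph C) (k t : ℕ)
    (ES : (Fin k → G.V) → Fin t → Finset G.V) :
    (l : ℕ) → (Fin k → G.V) → FWLPlainColor C k l
  | 0, v => G.isoType v
  | l + 1, v =>
      (fwlpPlainColor G k t ES l v,
        (Fintype.piFinset (ES v)).val.map fun w =>
          (nbhdTuple k t v w).map fun u => fwlpPlainColor G k t ES l u)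

/-! ### δ-k-LWL -/

/-- The δ-k-LWL coloring. -/
def dklwlColor (G : ColoredGraph C) (k : ℕ) : (l : ℕ) → (Fin k → G.V) → WLColor C k l
  | 0, v => G.isoType v
  | l + 1, v =>
      (dklwlColor G k l v,
        fun j => (G.nbhd (v j)).val.map fun w => dklwlColor G k l (Function.update v j w))

/-! ### SLFWL(2) -/

/-- The type of SLFWL(2) colors at iteration `l`. -/
def SLColor (C : Type) : ℕ → Type
  | 0 => IsoType C 2
  | l + 1 => SLColor C l × Multiset (SLColor C l × SLColor C l)

/-- The SLFWL(2) coloring of pairs of vertices. -/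
def slColor (G : ColoredGraph C) : (l : ℕ) → G.V → G.V → SLColor C l
  | 0, v₁, v₂ => G.isoType ![v₁, v₂]
  | l + 1, v₁, v₂ =>
      (slColor G l v₁ v₂,
        (G.closedNbhd v₁ ∪ G.closedNbhd v₂).val.map fun w =>
          (slColor G l v₁ w, slColor G l w v₂))

/-! ### The edge-based subgraph refinement (as in I²-GNN) -/

/-- The type of edge-based subgraph refinement colors at iteration `l`. -/
def EdgeColor (C : Type) : ℕ → Type
  | 0 => C × Prop × Prop
  | l + 1 => EdgeColor C l × Multiset (EdgeColor C l)

/-- The edge-based subgraph refinement: the color of `v₂` in the subgraph rooted at the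
edge `(v₁, w₂)`; the initial color is `l_G(v₂)` together with markers for `v₂ = v₁` and
`v₂ = w₂`. -/
def edgeColor (G : ColoredGraph C) : (l : ℕ) → G.V → G.V → G.V → EdgeColor C l
  | 0, v₁, v₂, w₂ => (G.color v₂, v₂ = v₁, v₂ = w₂)
  | l + 1, v₁, v₂, w₂ =>
      (edgeColor G l v₁ v₂ w₂, (G.nbhd v₂).val.map fun w₁ => edgeColor G l v₁ w₁ w₂)

/-- The graph color histogram of the edge-based subgraph refinement at iteration `l`:
`{{ {{ {{ C(v₁,v₂,w₂) : v₂ ∈ V }} : w₂ ∈ Q₁(v₁) }} : v₁ ∈ V }}`. -/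
def edgeHistogram (G : ColoredGraph C) (l : ℕ) :
    Multiset (Multiset (Multiset (EdgeColor C l))) :=
  Finset.univ.val.map fun v₁ =>
    (G.nbhd v₁).val.map fun w₂ => Finset.univ.val.map fun v₂ => edgeColor G l v₁ v₂ w₂

/-! ### GraphSNN -/

/-- `V_{v₁v₂}`: the vertex set of the overlapping 1-hop subgraph between `v₁` and `v₂`. -/
def snnOverlapVerts (G : ColoredGraph C) (v₁ v₂ : G.V) : Finset G.V :=
  G.closedNbhd v₁ ∩ G.closedNbhd v₂

/-- `|E_{v₁v₂}|`: the number of edges of `G` with both endpoints in `V_{v₁v₂}`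
(ordered adjacent pairs counted once, i.e. divided by two). -/
def snnEdgeCount (G : ColoredGraph C) (v₁ v₂ : G.V) : ℝ :=
  ((@Finset.filter (G.V × G.V)
      (fun p => p.1 ∈ snnOverlapVerts G v₁ v₂ ∧ p.2 ∈ snnOverlapVerts G v₁ v₂ ∧
        G.adj p.1 p.2)
      (Classical.decPred _) Finset.univ).card : ℝ) / 2

/-- The GraphSNN structural value `|E_{v₁v₂}|·|V_{v₁v₂}|^λ / (|V_{v₁v₂}|·(|V_{v₁v₂}|−1))`. -/
def snnVal (G : ColoredGraph C) (lam : ℝ) (v₁ v₂ : G.V) : ℝ :=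
  (snnEdgeCount G v₁ v₂ * ((snnOverlapVerts G v₁ v₂).card : ℝ) ^ lam) /
    (((snnOverlapVerts G v₁ v₂).card : ℝ) * (((snnOverlapVerts G v₁ v₂).card : ℝ) - 1))

/-- The type of GraphSNN colors at iteration `l`. -/
def SNNColor (C : Type) : ℕ → Type
  | 0 => IsoType C 2 ⊕ ℝ
  | l + 1 => (SNNColor C l × Multiset (SNNColor C l × SNNColor C l)) ⊕ ℝ

/-- The GraphSNN refinement: off-diagonal pairs get the fixed color `snnVal`; diagonal
pairs are refined iteratively. -/
def snnColor (G : ColoredGraph C) (lam : ℝ) : (l : ℕ) → G.V → G.V → SNNColor C l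
  | 0, v₁, v₂ =>
      if v₁ = v₂ then Sum.inl (G.isoType ![v₁, v₂]) else Sum.inr (snnVal G lam v₁ v₂)
  | l + 1, v₁, v₂ =>
      if v₁ = v₂ then
        Sum.inl (snnColor G lam l v₁ v₂,
          (G.nbhd v₁).val.map fun w => (snnColor G lam l v₁ w, snnColor G lam l w w))
      else Sum.inr (snnVal G lam v₁ v₂)

/-! ### KP-GNN (shortest-path-distance kernel, peripheral encoder as powerful as 1-WL) -/

/-- The type of KP-GNN colors at iteration `l`. -/
def KPColor (C : Type) : ℕ → Type
  | 0 => IsoType C 2 × ℕ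
  | l + 1 => KPColor C l × (Multiset (KPColor C l × KPColor C l) ⊕ Multiset (KPColor C l))

/-- The KP-GNN refinement of pairs of vertices. -/
def kpColor (G : ColoredGraph C) : (l : ℕ) → G.V → G.V → KPColor C l
  | 0, v₁, v₂ => (G.isoType ![v₁, v₂], G.toSimple.dist v₁ v₂)
  | l + 1, v₁, v₂ =>
      (kpColor G l v₁ v₂,
        if v₁ = v₂ then
          Sum.inl (Finset.univ.val.map fun w => (kpColor G l w w, kpColor G l v₁ w))
        else
          Sum.inr ((G.sphere (G.toSimple.dist v₁ v₂) v₁ ∩ G.nbhd v₂).val.map fun w =>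
            kpColor G l v₁ w))

/-- The type of colors of the (2,1)-FWL+ instance corresponding to KP-GNN. -/
def KPFColor (C : Type) : ℕ → Type
  | 0 => IsoType C 2 × ℕ
  | l + 1 => KPFColor C l × Multiset (KPFColor C l)

/-- The (2,1)-FWL+ instance with `ES(v₁,v₂) = Q_{SPD(v₁,v₂)}(v₁) ∩ Q₁(v₂)` and initial
color the isomorphism type together with `SPD(v₁,v₂)`. -/
def kpfColor (G : ColoredGraph C) : (l : ℕ) → G.V → G.V → KPFColor C l
  | 0, v₁, v₂ => (G.isoType ![v₁, v₂], G.toSimple.dist v₁ v₂)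
  | l + 1, v₁, v₂ =>
      (kpfColor G l v₁ v₂,
        (G.sphere (G.toSimple.dist v₁ v₂) v₁ ∩ G.nbhd v₂).val.map fun w => kpfColor G l v₁ w)

/-! ### GDGNN -/

/-- The type of GDGNN colors at iteration `l`. -/
def GDColor (C : Type) : ℕ → Type
  | 0 => IsoType C 2
  | l + 1 => GDColor C l × Multiset (GDColor C l) × Multiset (GDColor C l)

/-- The GDGNN refinement of pairs of vertices. -/
def gdColor (G : ColoredGraph C) : (l : ℕ) → G.V → G.V → GDColor C l
  | 0, v₁, v₂ => G.isoType ![v₁, v₂]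
  | l + 1, v₁, v₂ =>
      (gdColor G l v₁ v₂,
        (G.nbhd v₂).val.map fun w => gdColor G l v₁ w,
        (G.spSet v₁ v₂).val.map fun w => gdColor G l v₁ w)

/-! ### N²-FWL -/

/-- The coordinatewise neighborhood of N²-FWL with hop parameter `h`:
`N²(v₁,v₂) = (N₁(v₂) × N₁(v₁)) ∩ (N_h(v₁) ∩ N_h(v₂))²`, written as a product. -/
def n2ES (G : ColoredGraph C) (h : ℕ) (v : Fin 2 → G.V) : Fin 2 → Finset G.V :=
  ![G.closedNbhd (v 1) ∩ G.ball h (v 0) ∩ G.ball h (v 1),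
    G.closedNbhd (v 0) ∩ G.ball h (v 0) ∩ G.ball h (v 1)]

/-- The N²-FWL coloring with hop parameter `h`:
the (2,2)-FWL+ instance with neighborhood `N²(v₁,v₂)`. -/
def n2Color (G : ColoredGraph C) (h : ℕ) : (l : ℕ) → (Fin 2 → G.V) → FWLColor C 2 2 l :=
  fwlpColor G 2 2 (n2ES G h)

end

section Stmt11Aux

open SimpleGraph

variable {C : Type}

lemma fwlColor_succ (G : ColoredGraph C) (k t l : ℕ) (v : Fin k → G.V) :
    fwlColor G k t (l+1) v = (fwlColor G k t l v,
      hms t (fun _ => (Finset.univ : Finset G.V))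
        fun w => (nbhdTuple k t v w).map (fwlColor G k t l)) := rfl

lemma fwlColor_proj {G : ColoredGraph C} {k t l : ℕ} {x y : Fin k → G.V}
    (h : fwlColor G k t (l+1) x = fwlColor G k t (l+1) y) :
    fwlColor G k t l x = fwlColor G k t l y := by
  rw [fwlColor_succ, fwlColor_succ] at h
  exact (Prod.mk.inj h).1

lemma fwlColor_proj_le {G : ColoredGraph C} {k t l l' : ℕ} {x y : Fin k → G.V}
    (hle : l ≤ l') (h : fwlColor G k t l' x = fwlColor G k t l' y) :
    fwlColor G k t l x = fwlColor G k t l y := by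
  obtain ⟨m, rfl⟩ := Nat.exists_eq_add_of_le hle
  clear hle
  revert h
  induction m with
  | zero => exact fun h => h
  | succ m ih =>
    intro h
    exact ih (fwlColor_proj (by rwa [show l+(m+1) = (l+m)+1 from rfl] at h))

/-- Map a function over a hierarchical multiset. -/
def HMSmap {α β : Type} (g : α → β) : (t : ℕ) → HMS α t → HMS β t
  | 0, a => g a
  | t+1, s => s.map (HMSmap g t)

lemma hms_map {V α β : Type} (g : α → β) :
    ∀ (t : ℕ) (S : Fin t → Finset V) (x : (Fin t → V) → α),
      HMSmap g t (hms t S x) = hms t S (fun w => g (x w))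
  | 0, S, x => rfl
  | t+1, S, x => by
    simp only [hms, HMSmap, Multiset.map_map, Function.comp]
    congr 1
    funext wl
    exact hms_map g t _ _

lemma hms_exists {V α : Type} [Fintype V] : ∀ (t : ℕ) (x y : (Fin t → V) → α),
    hms t (fun _ => (Finset.univ : Finset V)) x
       = hms t (fun _ => (Finset.univ : Finset V)) y →
    ∀ w : Fin t → V, ∃ w', x w = y w'
  | 0, x, y, h, w =>
    ⟨finZeroElim, by rw [show w = finZeroElim from funext fun i => i.elim0]; exact h⟩
  | t+1, x, y, h, w => by
    rw [← Fin.snoc_init_self w]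
    simp only [hms] at h
    have hmem : (hms t (fun _ => (Finset.univ : Finset V))
          fun w0 => x (Fin.snoc w0 (w (Fin.last t)))) ∈
        Multiset.map (fun wl => hms t (fun _ => (Finset.univ : Finset V))
          fun w0 => y (Fin.snoc w0 wl)) (Finset.univ.val) := by
      rw [← h]
      exact Multiset.mem_map_of_mem _ (Finset.mem_val.mpr (Finset.mem_univ _))
    obtain ⟨wl', _, heq⟩ := Multiset.mem_map.mp hmem
    obtain ⟨w0', hx⟩ := hms_exists t _ _ heq.symm (Fin.init w)
    exact ⟨Fin.snoc w0' wl', hx⟩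

/-- The combinatorial skeleton of `nbhdTuple`. -/
def skel (k t : ℕ) : List (List (Fin t) × List (Fin k)) :=
  (List.range (min k t + 1)).flatMap fun m =>
    ((List.finRange t).sublistsLen m).flatMap fun ws =>
      ((List.finRange k).sublistsLen m).map fun js => (ws, js)

lemma nbhdTuple_eq_skel {V : Type} (k t : ℕ) (v : Fin k → V) (w : Fin t → V) :
    nbhdTuple k t v w = (skel k t).map fun p => replaceList v (p.2.zip (p.1.map w)) := by
  simp [nbhdTuple, skel, List.map_flatMap, List.map_map, Function.comp_def]

lemma pair_mem_skel {k t : ℕ} (hk : 1 ≤ k) (ht : 1 ≤ t) (i0 : Fin t) (p : Fin k) :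
    (([i0], [p]) : List (Fin t) × List (Fin k)) ∈ skel k t := by
  simp only [skel, List.mem_flatMap, List.mem_map, List.mem_range]
  refine ⟨1, by omega, [i0], ?_, [p], ?_, rfl⟩
  · simp [List.mem_sublistsLen, List.singleton_sublist]
  · simp [List.mem_sublistsLen, List.singleton_sublist]

lemma update_color_eq {G : ColoredGraph C} {k t l : ℕ} (hk : 1 ≤ k) (ht : 1 ≤ t)
    {v₁ v₂ : Fin k → G.V} {w w' : Fin t → G.V}
    (h : (nbhdTuple k t v₁ w).map (fwlColor G k t l)
       = (nbhdTuple k t v₂ w').map (fwlColor G k t l))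
    (i0 : Fin t) (p : Fin k) :
    fwlColor G k t l (Function.update v₁ p (w i0))
      = fwlColor G k t l (Function.update v₂ p (w' i0)) := by
  rw [nbhdTuple_eq_skel, nbhdTuple_eq_skel, List.map_map, List.map_map,
    List.map_eq_map_iff] at h
  have h2 := h ([i0], [p]) (pair_mem_skel hk ht i0 p)
  simpa [replaceList, Function.comp] using h2

lemma stable_propagate {G : ColoredGraph C} {k t L : ℕ}
    (hstep : ∀ x y : Fin k → G.V, fwlColor G k t L x = fwlColor G k t L y →
      fwlColor G k t (L+1) x = fwlColor G k t (L+1) y) :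
    ∀ m, ∀ x y : Fin k → G.V, fwlColor G k t L x = fwlColor G k t L y →
      fwlColor G k t (L+m) x = fwlColor G k t (L+m) y := by
  intro m
  induction m with
  | zero => exact fun x y h => h
  | succ m ih =>
    intro x y h
    have hft : Function.FactorsThrough (fwlColor G k t (L+m)) (fwlColor G k t L) :=
      fun a b hab => ih a b hab
    set f := Function.extend (fwlColor G k t L) (fwlColor G k t (L+m))
      (fun _ => fwlColor G k t (L+m) x) with hf
    have hfc : ∀ u, f (fwlColor G k t L u) = fwlColor G k t (L+m) u :=
      fun u => hft.extend_apply _ u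
    have h1 := hstep x y h
    rw [fwlColor_succ, fwlColor_succ] at h1
    replace h1 := Prod.mk.inj h1
    have key : ∀ z : Fin k → G.V,
        hms t (fun _ => (Finset.univ : Finset G.V))
            (fun w => (nbhdTuple k t z w).map (fwlColor G k t (L+m)))
          = HMSmap (List.map f) t (hms t (fun _ => (Finset.univ : Finset G.V))
            (fun w => (nbhdTuple k t z w).map (fwlColor G k t L))) := by
      intro z
      rw [hms_map]
      congr 1
      funext w
      rw [List.map_map]
      congr 1
      funext u
      exact (hfc u).symm
    rw [show L+(m+1) = (L+m)+1 from rfl, fwlColor_succ, fwlColor_succ]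
    exact congrArg₂ Prod.mk (ih x y h) (by rw [key x, key y, h1.2])

lemma exists_stable (G : ColoredGraph C) (k t : ℕ) :
    ∃ L, ∀ x y : Fin k → G.V, fwlColor G k t L x = fwlColor G k t L y →
      ∀ l, fwlColor G k t l x = fwlColor G k t l y := by
  classical
  set c : ℕ → ℕ := fun l => (Finset.univ.image (fwlColor G k t l)).card with hc
  have himg : ∀ l, ((Finset.univ.image (fwlColor G k t (l+1))).image
      (fun p : FWLColor C k t (l+1) => (p.1 : FWLColor C k t l)))
      = Finset.univ.image (fwlColor G k t l) := by
    intro l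
    rw [Finset.image_image]
    have : (fun p : FWLColor C k t (l+1) => (p.1 : FWLColor C k t l))
        ∘ fwlColor G k t (l+1) = fwlColor G k t l := funext fun v => rfl
    rw [this]
  have hle : ∀ l, c l ≤ c (l+1) := by
    intro l
    rw [hc]
    dsimp only
    rw [← himg l]
    exact Finset.card_image_le
  have hbound : ∀ l, c l ≤ Fintype.card (Fin k → G.V) := by
    intro l
    calc c l ≤ Finset.univ.card := Finset.card_image_le
    _ = _ := Finset.card_univ
  have hLex : ∃ L, c L = c (L+1) := by
    by_contra hno
    push_neg at hno
    have hsm : StrictMono c := strictMono_nat_of_lt_succ fun n =>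
      lt_of_le_of_ne (hle n) (hno n)
    have h1 := hsm.le_apply (x := Fintype.card (Fin k → G.V) + 1)
    have h2 := hbound (Fintype.card (Fin k → G.V) + 1)
    omega
  obtain ⟨L, hLc⟩ := hLex
  have hinj : Set.InjOn (fun p : FWLColor C k t (L+1) => (p.1 : FWLColor C k t L))
      (Finset.univ.image (fwlColor G k t (L+1))) := by
    apply Finset.card_image_iff.mp
    rw [himg L]
    exact hLc
  have hstep : ∀ x y : Fin k → G.V, fwlColor G k t L x = fwlColor G k t L y →
      fwlColor G k t (L+1) x = fwlColor G k t (L+1) y := by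
    intro x y h
    have hx : fwlColor G k t (L+1) x ∈ Finset.univ.image (fwlColor G k t (L+1)) :=
      Finset.mem_image_of_mem _ (Finset.mem_univ x)
    have hy : fwlColor G k t (L+1) y ∈ Finset.univ.image (fwlColor G k t (L+1)) :=
      Finset.mem_image_of_mem _ (Finset.mem_univ y)
    exact hinj (Finset.mem_coe.mpr hx) (Finset.mem_coe.mpr hy) h
  refine ⟨L, fun x y hxy l => ?_⟩
  rcases Nat.le_total l L with h' | h'
  · exact fwlColor_proj_le h' hxy
  · obtain ⟨m, rfl⟩ := Nat.exists_eq_add_of_le h'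
    exact stable_propagate hstep m x y hxy

lemma isoType_eq_iff {G : ColoredGraph C} {k : ℕ} {x y : Fin k → G.V}
    (h : G.isoType x = G.isoType y) (i j : Fin k) :
    (x i = x j ↔ y i = y j) ∧ (G.adj (x i) (x j) ↔ G.adj (y i) (y j)) := by
  have h2 := congrArg (fun z : IsoType C k => z.2.1 i j) h
  have h3 := congrArg (fun z : IsoType C k => z.2.2 i j) h
  exact ⟨iff_of_eq h2, iff_of_eq h3⟩

lemma walkle_succ_iff {G : ColoredGraph C} {d : ℕ} {a b : G.V} :
    (∃ p : G.toSimple.Walk a b, p.length ≤ d+1) ↔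
      a = b ∨ ∃ w, G.toSimple.Adj a w ∧ ∃ q : G.toSimple.Walk w b, q.length ≤ d := by
  constructor
  · rintro ⟨p, hp⟩
    cases p with
    | nil => exact Or.inl rfl
    | cons h q =>
      exact Or.inr ⟨_, h, q, by simpa [SimpleGraph.Walk.length_cons] using hp⟩
  · rintro (rfl | ⟨w, hadj, q, hq⟩)
    · exact ⟨SimpleGraph.Walk.nil, by simp⟩
    · exact ⟨SimpleGraph.Walk.cons hadj q, by
        simpa [SimpleGraph.Walk.length_cons] using Nat.succ_le_succ hq⟩

lemma key_step {G : ColoredGraph C} {k t : ℕ} (hk : 2 ≤ k) (ht : 1 ≤ t) {L : ℕ}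
    (hL : ∀ x y : Fin k → G.V, fwlColor G k t L x = fwlColor G k t L y →
      ∀ l, fwlColor G k t l x = fwlColor G k t l y) :
    ∀ d (u₁ u₂ : Fin k → G.V), (∀ l, fwlColor G k t l u₁ = fwlColor G k t l u₂) →
      ∀ i j : Fin k, (∃ p : G.toSimple.Walk (u₁ i) (u₁ j), p.length ≤ d) →
        ∃ p : G.toSimple.Walk (u₂ i) (u₂ j), p.length ≤ d := by
  intro d
  induction d with
  | zero =>
    rintro u₁ u₂ hu i j ⟨p, hp⟩
    have h1 : u₁ i = u₁ j :=
      SimpleGraph.Walk.eq_of_length_eq_zero (Nat.le_zero.mp hp)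
    have h2 : u₂ i = u₂ j := ((isoType_eq_iff (hu 0) i j).1).mp h1
    rw [h2]
    exact ⟨SimpleGraph.Walk.nil, le_refl 0⟩
  | succ d ih =>
    intro u₁ u₂ hu i j hw
    rcases walkle_succ_iff.mp hw with heq | ⟨w₀, hadj, q, hq⟩
    · exact walkle_succ_iff.mpr (Or.inl (((isoType_eq_iff (hu 0) i j).1).mp heq))
    · by_cases hij : i = j
      · subst hij
        exact ⟨SimpleGraph.Walk.nil, Nat.zero_le _⟩
      · have h1 := hu (L+1)
        rw [fwlColor_succ, fwlColor_succ] at h1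
        replace h1 := Prod.mk.inj h1
        obtain ⟨w', hww⟩ := hms_exists t _ _ h1.2 (fun _ => w₀)
        set i0 : Fin t := ⟨0, ht⟩ with hi0
        have hupd : ∀ p : Fin k, fwlColor G k t L (Function.update u₁ p w₀)
            = fwlColor G k t L (Function.update u₂ p (w' i0)) := fun p =>
          update_color_eq (le_trans one_le_two hk) ht hww i0 p
        -- adjacency transfer via the tuple updated at j
        have hy := hL _ _ (hupd j) 0
        have hadj2 : G.toSimple.Adj (u₂ i) (w' i0) := by
          have h3 := ((isoType_eq_iff hy i j).2).mpr
          have h4 := (isoType_eq_iff hy i j).2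
          rw [Function.update_of_ne hij, Function.update_self,
            Function.update_of_ne hij, Function.update_self] at h4
          exact h4.mp hadj
        -- walk transfer via the tuple updated at i
        have hz := hL _ _ (hupd i)
        have h5 := ih (Function.update u₁ i w₀) (Function.update u₂ i (w' i0)) hz i j
        rw [Function.update_self, Function.update_of_ne (Ne.symm hij),
          Function.update_self, Function.update_of_ne (Ne.symm hij)] at h5
        exact walkle_succ_iff.mpr (Or.inr ⟨w' i0, hadj2, h5 ⟨q, hq⟩⟩)

end Stmt11Aux

/-- The stable `(k,t)`-FWL color of a `k`-tuple determines all pairwise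
shortest-path distances within the tuple. -/
theorem stmt_11 {C : Type} (k t : ℕ) (hk : 2 ≤ k) (ht : 1 ≤ t)
    (G : ColoredGraph C) (v₁ v₂ : Fin k → G.V)
    (hcol : ∀ l, fwlColor G k t l v₁ = fwlColor G k t l v₂) :
    ∀ i j : Fin k, G.toSimple.dist (v₁ i) (v₁ j) = G.toSimple.dist (v₂ i) (v₂ j) := by
  obtain ⟨L, hL⟩ := exists_stable G k t
  intro i j
  have hiff : ∀ d, (∃ p : G.toSimple.Walk (v₁ i) (v₁ j), p.length ≤ d) ↔
      (∃ p : G.toSimple.Walk (v₂ i) (v₂ j), p.length ≤ d) := fun d =>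
    ⟨key_step hk ht hL d v₁ v₂ hcol i j,
     key_step hk ht hL d v₂ v₁ (fun l => (hcol l).symm) i j⟩
  by_cases hreach : G.toSimple.Reachable (v₁ i) (v₁ j)
  · have hreach2 : G.toSimple.Reachable (v₂ i) (v₂ j) := by
      obtain ⟨p⟩ := hreach
      obtain ⟨q, -⟩ := (hiff p.length).mp ⟨p, le_refl _⟩
      exact ⟨q⟩
    apply le_antisymm
    · obtain ⟨p, hp⟩ := hreach2.exists_walk_length_eq_dist
      obtain ⟨q, hq⟩ := (hiff p.length).mpr ⟨p, le_refl _⟩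
      exact le_trans (SimpleGraph.dist_le q) (hp ▸ hq)
    · obtain ⟨p, hp⟩ := hreach.exists_walk_length_eq_dist
      obtain ⟨q, hq⟩ := (hiff p.length).mp ⟨p, le_refl _⟩
      exact le_trans (SimpleGraph.dist_le q) (hp ▸ hq)
  · have hreach2 : ¬ G.toSimple.Reachable (v₂ i) (v₂ j) := by
      intro h
      obtain ⟨p⟩ := h
      obtain ⟨q, -⟩ := (hiff p.length).mpr ⟨p, le_refl _⟩
      exact hreach ⟨q⟩
    rw [SimpleGraph.dist_eq_zero_of_not_reachable hreach,
      SimpleGraph.dist_eq_zero_of_not_reachable hreach2]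
end

section
/- Let k ≥ 2. The (k,1)-FWL+ instance with equivariant set ES(v) = ⋃_{i=1}^{k} Q_1(v_i) is more powerful than δ-k-LWL: for every pair of colored graphs G, H, if the color histograms of G and H under this (k,1)-FWL+ instance are equal, then their δ-k-LWL color histograms are equal. -/
/-!
Common formalization of colored graphs, the k-dimensional Weisfeiler-Lehman (WL) test,
the (k,t)-dimensional Folklore WL test (k,t)-FWL and its extension (k,t)-FWL+, together
with the various specific refinement procedures (δ-k-LWL, GraphSNN, edge-based subgraph
refinement, KP-GNN, GDGNN, SLFWL(2), N²-FWL).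

Convention: all colorings are formalized as explicitly-valued nested data (an injective
HASH is the identity).  "The stable colors (resp. color histograms) are equal" is rendered
as "the colors (resp. color histograms) at every iteration l are equal"; since the colors
at iteration l determine those at every earlier iteration and the partitions stabilize on
finite graphs, this is equivalent to equality of the stable colors.
-/

open Finset

noncomputable section Aux12

variable {C : Type}

/-- Extract the iso type (level-0 component) of an FWL color. -/
def baseIso12 {k : ℕ} : ∀ l, FWLColor C k 1 l → IsoType C k
  | 0, c => c
  | _ + 1, c => baseIso12 _ c.1

/-- Position of `v_{w/j}` in the neighborhood tuple `Q^F_w(v)` (for `t = 1`). -/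
def idx12 (k : ℕ) (j : Fin k) : ℕ :=
  1 + @List.idxOf _ instBEqOfDecidableEq [j] ((List.finRange k).sublistsLen 1)

def other12 {k : ℕ} (hk : 2 ≤ k) (j : Fin k) : Fin k :=
  if j = ⟨0, by omega⟩ then ⟨1, by omega⟩ else ⟨0, by omega⟩

lemma other12_ne {k : ℕ} (hk : 2 ≤ k) (j : Fin k) : other12 hk j ≠ j := by
  unfold other12
  split
  · rename_i h; rw [h]; intro hc; exact absurd (congrArg Fin.val hc) (by simp)
  · rename_i h; intro hc; exact h hc.symm

open Classical in
/-- Reconstruct the δ-k-LWL color from the (k,1)-FWL+ color. -/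
def convWL12 {k : ℕ} (hk : 2 ≤ k) : ∀ l, FWLColor C k 1 l → WLColor C k l
  | 0, c => c
  | l + 1, c =>
      (convWL12 hk l c.1,
        fun j =>
          Multiset.filterMap (fun L : List (FWLColor C k 1 l) =>
            if (match L[idx12 k (other12 hk j)]? with
                | some d => (baseIso12 l d).2.2 j (other12 hk j)
                | none => False) then
              (L[idx12 k j]?).map (convWL12 hk l)
            else none) c.2)

lemma baseIso12_fwlp {k : ℕ} (G : ColoredGraph C)
    (ES : (Fin k → G.V) → Fin 1 → Finset G.V) :
    ∀ l (v : Fin k → G.V), baseIso12 l (fwlpColor G k 1 ES l v) = G.isoType v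
  | 0, _ => rfl
  | l + 1, v => baseIso12_fwlp G ES l v

lemma snoc_one {V : Type} (wl : V) :
    (Fin.snoc finZeroElim wl : Fin 1 → V) = fun _ => wl := by
  funext i
  rw [Fin.eq_zero i]
  exact Fin.snoc_last _ _

lemma nbhdTuple_one {V : Type} {k : ℕ} (hk : 1 ≤ k) (v : Fin k → V) (w : Fin 1 → V) :
    nbhdTuple k 1 v w =
      v :: ((List.finRange k).sublistsLen 1).map
        (fun js => replaceList v (js.zip [w 0])) := by
  have hmin : min k 1 = 1 := by omega
  have h1 : (List.finRange 1).sublistsLen 1 = [[0]] := by simp [List.finRange]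
  simp [nbhdTuple, hmin, List.range_succ, h1, replaceList, List.flatMap_cons]

lemma getElem_nbhd {V β : Type} {k : ℕ} (hk : 1 ≤ k) (v : Fin k → V) (w : Fin 1 → V)
    (g : (Fin k → V) → β) (j : Fin k) :
    ((nbhdTuple k 1 v w).map g)[idx12 k j]? = some (g (Function.update v j (w 0))) := by
  rw [nbhdTuple_one hk]
  have hmem : [j] ∈ (List.finRange k).sublistsLen 1 := by
    rw [List.mem_sublistsLen]
    exact ⟨by simp [List.singleton_sublist], rfl⟩
  have hlt : @List.idxOf _ instBEqOfDecidableEq [j] ((List.finRange k).sublistsLen 1)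
      < ((List.finRange k).sublistsLen 1).length := (@List.idxOf_lt_length_iff _ instBEqOfDecidableEq _ _ _).2 hmem
  have hget : ((List.finRange k).sublistsLen 1)[@List.idxOf _ instBEqOfDecidableEq [j]
      ((List.finRange k).sublistsLen 1)] = [j] := @List.getElem_idxOf _ instBEqOfDecidableEq _ _ _ hlt
  rw [idx12, List.map_cons, List.map_map]
  rw [show (1 : ℕ) + @List.idxOf _ instBEqOfDecidableEq [j]
      ((List.finRange k).sublistsLen 1) = (@List.idxOf _ instBEqOfDecidableEq [j]
      ((List.finRange k).sublistsLen 1)) + 1 from by omega]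
  rw [List.getElem?_cons_succ, List.getElem?_map]
  rw [List.getElem?_eq_getElem hlt, hget]
  simp [replaceList]

lemma filterMap_if {α β : Type} (p : α → Prop) [DecidablePred p] (f : α → β)
    (s : Multiset α) :
    Multiset.filterMap (fun a => if p a then some (f a) else none) s =
      (s.filter p).map f := by
  induction s using Multiset.induction_on with
  | empty => simp
  | cons a s ih =>
    by_cases h : p a <;> simp [h, ih]

lemma convWL12_fwlp {k : ℕ} (hk : 2 ≤ k) (G : ColoredGraph C) :
    ∀ l (v : Fin k → G.V),
      convWL12 hk l (fwlpColor G k 1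
        (fun v _ => Finset.univ.biUnion fun i => G.nbhd (v i)) l v) = dklwlColor G k l v := by
  have hk1 : 1 ≤ k := by omega
  intro l
  induction l with
  | zero => intro v; rfl
  | succ l ih =>
    classical
    intro v
    set ES : (Fin k → G.V) → Fin 1 → Finset G.V :=
      fun v _ => Finset.univ.biUnion fun i => G.nbhd (v i) with hES
    rw [convWL12, fwlpColor, dklwlColor]
    refine congrArg₂ Prod.mk (ih v) ?_
    funext j
    have hne : j ≠ other12 hk j := (other12_ne hk j).symm
    -- unfold the hms
    show Multiset.filterMap (α := List (FWLColor C k 1 l)) _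
      (hms 1 (ES v) fun w => (nbhdTuple k 1 v w).map (fwlpColor G k 1 ES l)) = _
    rw [show (hms 1 (ES v) fun w => (nbhdTuple k 1 v w).map (fwlpColor G k 1 ES l)) =
        (ES v (Fin.last 0)).val.map fun wl =>
          (nbhdTuple k 1 v (fun _ => wl)).map (fwlpColor G k 1 ES l) from by
      simp only [hms, snoc_one]; rfl]
    rw [Multiset.filterMap_map]
    have key : ∀ wl : G.V,
        ((fun L : List (FWLColor C k 1 l) =>
            if (match L[idx12 k (other12 hk j)]? with
                | some d => (baseIso12 l d).2.2 j (other12 hk j)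
                | none => False) then
              (L[idx12 k j]?).map (convWL12 hk l)
            else none) ∘
          fun wl => (nbhdTuple k 1 v (fun _ => wl)).map (fwlpColor G k 1 ES l)) wl =
        if G.adj (v j) wl then
          some (dklwlColor G k l (Function.update v j wl)) else none := by
      intro wl
      have h1 := getElem_nbhd (β := FWLColor C k 1 l) hk1 v (fun _ => wl)
        (fwlpColor G k 1 ES l) (other12 hk j)
      have h2 := getElem_nbhd (β := FWLColor C k 1 l) hk1 v (fun _ => wl)
        (fwlpColor G k 1 ES l) j
      simp only [Function.comp_apply, h1, h2, baseIso12_fwlp, Option.map_some]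
      have hcond : (G.isoType (Function.update v (other12 hk j) wl)).2.2 j (other12 hk j)
          = G.adj (v j) wl := by
        simp [ColoredGraph.isoType, Function.update_of_ne hne, Function.update_self]
      rw [hcond, ih]
    rw [funext key]
    rw [filterMap_if (fun wl => G.adj (v j) wl)
      (fun wl => dklwlColor G k l (Function.update v j wl))]
    have hfil : Multiset.filter (fun wl => G.adj (v j) wl) (ES v (Fin.last 0)).val
        = (G.nbhd (v j)).val := by
      have : Finset.filter (fun wl => G.adj (v j) wl) (ES v (Fin.last 0))
          = G.nbhd (v j) := by
        ext w
        simp only [Finset.mem_filter, hES, Finset.mem_biUnion, Finset.mem_univ,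
          true_and, ColoredGraph.nbhd, Finset.mem_filter]
        constructor
        · rintro ⟨_, h⟩; exact h
        · exact fun h => ⟨⟨j, h⟩, h⟩
      calc Multiset.filter (fun wl => G.adj (v j) wl) (ES v (Fin.last 0)).val
          = (Finset.filter (fun wl => G.adj (v j) wl) (ES v (Fin.last 0))).val := rfl
        _ = (G.nbhd (v j)).val := by rw [this]
    rw [hfil]

end Aux12

/-- The `(k,1)`-FWL+ instance with equivariant set
`ES(v) = ⋃ i, Q₁(vᵢ)` is more powerful than δ-k-LWL: equal stable color histograms of
the former imply equal stable δ-k-LWL color histograms. -/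
theorem stmt_12 {C : Type} (k : ℕ) (hk : 2 ≤ k) (G H : ColoredGraph C)
    (hfwl : ∀ l,
      (Finset.univ.val.map fun v : Fin k → G.V =>
        fwlpColor G k 1 (fun v _ => Finset.univ.biUnion fun i => G.nbhd (v i)) l v) =
      (Finset.univ.val.map fun v : Fin k → H.V =>
        fwlpColor H k 1 (fun v _ => Finset.univ.biUnion fun i => H.nbhd (v i)) l v)) :
    ∀ l, (Finset.univ.val.map fun v : Fin k → G.V => dklwlColor G k l v) =
      (Finset.univ.val.map fun v : Fin k → H.V => dklwlColor H k l v) := by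
  intro l
  have hG : (Finset.univ.val.map fun v : Fin k → G.V => dklwlColor G k l v)
      = Multiset.map (convWL12 hk l) (Finset.univ.val.map fun v : Fin k → G.V =>
          fwlpColor G k 1 (fun v _ => Finset.univ.biUnion fun i => G.nbhd (v i)) l v) := by
    rw [Multiset.map_map]
    exact Multiset.map_congr rfl fun v _ => (convWL12_fwlp hk G l v).symm
  have hH : (Finset.univ.val.map fun v : Fin k → H.V => dklwlColor H k l v)
      = Multiset.map (convWL12 hk l) (Finset.univ.val.map fun v : Fin k → H.V =>
          fwlpColor H k 1 (fun v _ => Finset.univ.biUnion fun i => H.nbhd (v i)) l v) := by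
    rw [Multiset.map_map]
    exact Multiset.map_congr rfl fun v _ => (convWL12_fwlp hk H l v).symm
  rw [hG, hH, hfwl l]
end

section
/- Fix a constant λ > 0. The (2,2)-FWL+ instance with ES²(v₁,v₂) = (Q_1(v₁)∩Q_1(v₂)) × (Q_1(v₁)∩Q_1(v₂)) is more powerful than the GraphSNN refinement: for every pair of colored graphs G, H, if the color histograms of G and H under this (2,2)-FWL+ instance are equal, then their GraphSNN color histograms are equal. -/
/-!
Common formalization of colored graphs, the k-dimensional Weisfeiler-Lehman (WL) test,
the (k,t)-dimensional Folklore WL test (k,t)-FWL and its extension (k,t)-FWL+, together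
with the various specific refinement procedures (δ-k-LWL, GraphSNN, edge-based subgraph
refinement, KP-GNN, GDGNN, SLFWL(2), N²-FWL).

Convention: all colorings are formalized as explicitly-valued nested data (an injective
HASH is the identity).  "The stable colors (resp. color histograms) are equal" is rendered
as "the colors (resp. color histograms) at every iteration l are equal"; since the colors
at iteration l determine those at every earlier iteration and the partitions stabilize on
finite graphs, this is equivalent to equality of the stable colors.
-/

open Finset

noncomputable section Stmt13
open scoped Classical

namespace Stmt13

def proj0 {C : Type} : (l : ℕ) → FWLPlainColor C 2 l → IsoType C 2
  | 0, c => c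
  | l+1, c => proj0 l c.1

def proj1 {C : Type} : (l : ℕ) → FWLPlainColor C 2 (l+1) → FWLPlainColor C 2 1
  | 0, c => c
  | l+1, c => proj1 l c.1

def eqP0 (ι : IsoType C 2) : Prop := ι.2.1 0 1
def adjP0 (ι : IsoType C 2) : Prop := ι.2.2 0 1

def sCard (c : FWLPlainColor C 2 1) : ℕ := Nat.sqrt (Multiset.card c.2)
def aCount (c : FWLPlainColor C 2 1) : ℕ :=
  Multiset.card (c.2.filter fun ℓ => ℓ[5]?.elim False adjP0)
def tCard (c : FWLPlainColor C 2 1) : ℕ :=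
  if eqP0 c.1 then 1 else if adjP0 c.1 then 2 else 0
def epsN (c : FWLPlainColor C 2 1) : ℕ :=
  if eqP0 c.1 then 0 else if adjP0 c.1 then 2 else 0
def nV (c : FWLPlainColor C 2 1) : ℕ := sCard c + tCard c
def snnValC (lam : ℝ) (c : FWLPlainColor C 2 1) : ℝ :=
  (((aCount c + 2 * sCard c * tCard c + epsN c : ℕ) : ℝ) / 2 * ((nV c : ℝ)) ^ lam) /
    ((nV c : ℝ) * ((nV c : ℝ) - 1))

def offColor {C : Type} : (l : ℕ) → ℝ → SNNColor C l
  | 0, r => Sum.inr r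
  | _+1, r => Sum.inr r

def phi {C : Type} (lam : ℝ) : (l : ℕ) → FWLPlainColor C 2 (l+1) → SNNColor C l
  | 0, c => if eqP0 c.1 then Sum.inl c.1 else Sum.inr (snnValC lam c)
  | l+1, c =>
      if eqP0 (proj0 (l+2) c) then
        Sum.inl (phi lam l c.1,
          (c.2.filter fun ℓ => ℓ[5]?.elim False fun a => eqP0 (proj0 (l+1) a)).map
            fun ℓ =>
              (ℓ[1]?.elim (offColor l 0) fun a => offColor l (snnValC lam (proj1 l a)),
               ℓ[5]?.elim (offColor l 0) fun a => phi lam l a))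
      else Sum.inr (snnValC lam (proj1 (l+1) c))

variable {C : Type} (G : ColoredGraph C)

abbrev fc (G : ColoredGraph C) (l : ℕ) (v : Fin 2 → G.V) : FWLPlainColor C 2 l :=
  fwlpPlainColor G 2 2 (fun v _ => G.nbhd (v 0) ∩ G.nbhd (v 1)) l v

lemma fc_zero (v : Fin 2 → G.V) : fc G 0 v = G.isoType v := rfl

lemma fc_succ (l : ℕ) (v : Fin 2 → G.V) :
    fc G (l+1) v = (fc G l v,
      (Fintype.piFinset fun _ : Fin 2 => G.nbhd (v 0) ∩ G.nbhd (v 1)).val.map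
        fun w => (nbhdTuple 2 2 v w).map (fc G l)) := rfl

lemma proj0_fc : ∀ (l : ℕ) (v : Fin 2 → G.V), proj0 l (fc G l v) = G.isoType v
  | 0, v => rfl
  | l+1, v => proj0_fc l v

lemma proj1_fc : ∀ (l : ℕ) (v : Fin 2 → G.V), proj1 l (fc G (l+1) v) = fc G 1 v
  | 0, v => rfl
  | l+1, v => proj1_fc l v

lemma nbhdTuple_two {V : Type} (v w : Fin 2 → V) : nbhdTuple 2 2 v w =
  [v, Function.update v 1 (w 1), Function.update v 0 (w 1),
   Function.update v 1 (w 0), Function.update v 0 (w 0),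
   Function.update (Function.update v 1 (w 1)) 0 (w 0)] := rfl
lemma eqP0_isoType (v : Fin 2 → G.V) : eqP0 (G.isoType v) = (v 0 = v 1) := rfl
lemma adjP0_isoType (v : Fin 2 → G.V) : adjP0 (G.isoType v) = G.adj (v 0) (v 1) := rfl

lemma sCard_fc (v : Fin 2 → G.V) :
    sCard (fc G 1 v) = (G.nbhd (v 0) ∩ G.nbhd (v 1)).card := by
  show Nat.sqrt (Multiset.card ((Fintype.piFinset fun _ : Fin 2 =>
      G.nbhd (v 0) ∩ G.nbhd (v 1)).val.map _)) = _
  rw [Multiset.card_map, ← Finset.card_def, Fintype.card_piFinset_const, Nat.sqrt_eq']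

lemma aCount_fc (v : Fin 2 → G.V) :
    aCount (fc G 1 v) =
      (((G.nbhd (v 0) ∩ G.nbhd (v 1)) ×ˢ (G.nbhd (v 0) ∩ G.nbhd (v 1))).filter
        fun p => G.adj p.1 p.2).card := by
  show Multiset.card (Multiset.filter _ ((Fintype.piFinset fun _ : Fin 2 =>
      G.nbhd (v 0) ∩ G.nbhd (v 1)).val.map fun w => (nbhdTuple 2 2 v w).map (fc G 0))) = _
  rw [Multiset.filter_map, Multiset.card_map]
  have h1 : ∀ w : Fin 2 → G.V,
      ((fun ℓ => ℓ[5]?.elim False adjP0) ∘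
        fun w => (nbhdTuple 2 2 v w).map (fc G 0)) w ↔ G.adj (w 0) (w 1) := by
    intro w
    show G.adj (Function.update (Function.update v 1 (w 1)) 0 (w 0) 0)
        (Function.update (Function.update v 1 (w 1)) 0 (w 0) 1) ↔ _
    rw [Function.update_self, Function.update_of_ne (show (1 : Fin 2) ≠ 0 by decide),
      Function.update_self]
  rw [← Finset.filter_val, ← Finset.card_def]
  apply Finset.card_bij' (fun w _ => (w 0, w 1)) (fun p _ => ![p.1, p.2])
  · intro w hw
    simp only [Finset.mem_filter, Fintype.mem_piFinset] at hw
    simp only [Finset.mem_filter, Finset.mem_product]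
    exact ⟨⟨hw.1 0, hw.1 1⟩, (h1 w).1 hw.2⟩
  · intro p hp
    simp only [Finset.mem_filter, Finset.mem_product] at hp
    simp only [Finset.mem_filter, Fintype.mem_piFinset]
    refine ⟨fun i => ?_, (h1 _).2 (by simpa using hp.2)⟩
    fin_cases i
    · simpa using hp.1.1
    · simpa using hp.1.2
  · intro w _; funext i; fin_cases i <;> rfl
  · intro p _; rfl

lemma mem_nbhd {u v : G.V} : u ∈ G.nbhd v ↔ G.adj v u := by
  simp [ColoredGraph.nbhd]

lemma mem_overlap {u v₁ v₂ : G.V} :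
    u ∈ snnOverlapVerts G v₁ v₂ ↔ ((u = v₁ ∨ G.adj v₁ u) ∧ (u = v₂ ∨ G.adj v₂ u)) := by
  simp [snnOverlapVerts, ColoredGraph.closedNbhd, Finset.mem_inter]

lemma card_filter_adj_union (S T : Finset G.V) (hdisj : Disjoint S T)
    (hadj : ∀ s ∈ S, ∀ t ∈ T, G.adj s t) :
    (((S ∪ T) ×ˢ (S ∪ T)).filter fun p => G.adj p.1 p.2).card =
      ((S ×ˢ S).filter fun p => G.adj p.1 p.2).card + 2 * S.card * T.card +
        ((T ×ˢ T).filter fun p => G.adj p.1 p.2).card := by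
  have dl : ∀ {A A' B B' : Finset G.V}, Disjoint A A' →
      Disjoint ((A ×ˢ B).filter fun p : G.V × G.V => G.adj p.1 p.2)
        ((A' ×ˢ B').filter fun p : G.V × G.V => G.adj p.1 p.2) := by
    intro A A' B B' h
    refine Finset.disjoint_left.2 ?_
    rintro ⟨a, b⟩ hab hab'
    simp only [Finset.mem_filter, Finset.mem_product] at hab hab'
    exact Finset.disjoint_left.1 h hab.1.1 hab'.1.1
  have dr : ∀ {A A' B B' : Finset G.V}, Disjoint B B' →
      Disjoint ((A ×ˢ B).filter fun p : G.V × G.V => G.adj p.1 p.2)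
        ((A' ×ˢ B').filter fun p : G.V × G.V => G.adj p.1 p.2) := by
    intro A A' B B' h
    refine Finset.disjoint_left.2 ?_
    rintro ⟨a, b⟩ hab hab'
    simp only [Finset.mem_filter, Finset.mem_product] at hab hab'
    exact Finset.disjoint_left.1 h hab.1.2 hab'.1.2
  have hST : ((S ×ˢ T).filter fun p : G.V × G.V => G.adj p.1 p.2) = S ×ˢ T := by
    apply Finset.filter_true_of_mem
    rintro ⟨a, b⟩ hab
    rw [Finset.mem_product] at hab
    exact hadj a hab.1 b hab.2
  have hTS : ((T ×ˢ S).filter fun p : G.V × G.V => G.adj p.1 p.2) = T ×ˢ S := by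
    apply Finset.filter_true_of_mem
    rintro ⟨a, b⟩ hab
    rw [Finset.mem_product] at hab
    exact G.symm _ _ (hadj b hab.2 a hab.1)
  rw [Finset.union_product, Finset.filter_union,
    Finset.card_union_of_disjoint (dl hdisj), Finset.product_union, Finset.filter_union,
    Finset.card_union_of_disjoint (dr hdisj), Finset.product_union, Finset.filter_union,
    Finset.card_union_of_disjoint (dr hdisj), hST, hTS, Finset.card_product,
    Finset.card_product]
  ring

lemma tCard_fc (v : Fin 2 → G.V) :
    tCard (fc G 1 v) = if v 0 = v 1 then 1 else if G.adj (v 0) (v 1) then 2 else 0 := by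
  have h1 : eqP0 ((fc G 1 v).1) = (v 0 = v 1) := rfl
  have h2 : adjP0 ((fc G 1 v).1) = (G.adj (v 0) (v 1)) := rfl
  show (if eqP0 ((fc G 1 v).1) then 1 else if adjP0 ((fc G 1 v).1) then 2 else 0) = _
  simp only [h1, h2]

lemma epsN_fc (v : Fin 2 → G.V) :
    epsN (fc G 1 v) = if v 0 = v 1 then 0 else if G.adj (v 0) (v 1) then 2 else 0 := by
  have h1 : eqP0 ((fc G 1 v).1) = (v 0 = v 1) := rfl
  have h2 : adjP0 ((fc G 1 v).1) = (G.adj (v 0) (v 1)) := rfl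
  show (if eqP0 ((fc G 1 v).1) then 0 else if adjP0 ((fc G 1 v).1) then 2 else 0) = _
  simp only [h1, h2]

lemma snnVal_eq (lam : ℝ) (v : Fin 2 → G.V) :
    snnValC lam (fc G 1 v) = snnVal G lam (v 0) (v 1) := by
  obtain ⟨T, hO, hdisj, hadjST, htc, hett⟩ :
      ∃ T : Finset G.V,
        snnOverlapVerts G (v 0) (v 1) = (G.nbhd (v 0) ∩ G.nbhd (v 1)) ∪ T ∧
        Disjoint (G.nbhd (v 0) ∩ G.nbhd (v 1)) T ∧
        (∀ s ∈ G.nbhd (v 0) ∩ G.nbhd (v 1), ∀ t ∈ T, G.adj s t) ∧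
        T.card = tCard (fc G 1 v) ∧
        ((T ×ˢ T).filter fun p : G.V × G.V => G.adj p.1 p.2).card = epsN (fc G 1 v) := by
    by_cases h : v 0 = v 1
    · refine ⟨{v 0}, ?_, ?_, ?_, ?_, ?_⟩
      · ext u
        rw [mem_overlap]
        simp only [Finset.mem_union, Finset.mem_inter, mem_nbhd, Finset.mem_singleton]
        constructor
        · rintro ⟨h1 | h1, h2 | h2⟩
          · exact Or.inr h1
          · exact Or.inr h1
          · exact Or.inr (h2.trans h.symm)
          · exact Or.inl ⟨h1, h2⟩
        · rintro (⟨h1, h2⟩ | rfl)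
          · exact ⟨Or.inr h1, Or.inr h2⟩
          · exact ⟨Or.inl rfl, Or.inl h⟩
      · rw [Finset.disjoint_singleton_right, Finset.mem_inter, mem_nbhd]
        exact fun hc => G.loopless _ hc.1
      · intro s hs t ht
        rw [Finset.mem_singleton] at ht
        rw [Finset.mem_inter, mem_nbhd, mem_nbhd] at hs
        exact ht ▸ G.symm _ _ hs.1
      · rw [tCard_fc, if_pos h, Finset.card_singleton]
      · rw [epsN_fc, if_pos h, Finset.singleton_product_singleton,
          Finset.filter_singleton, if_neg (G.loopless (v 0)), Finset.card_empty]
    · by_cases ha : G.adj (v 0) (v 1)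
      · refine ⟨{v 0, v 1}, ?_, ?_, ?_, ?_, ?_⟩
        · ext u
          rw [mem_overlap]
          simp only [Finset.mem_union, Finset.mem_inter, mem_nbhd, Finset.mem_insert,
            Finset.mem_singleton]
          constructor
          · rintro ⟨h1 | h1, h2 | h2⟩
            · exact Or.inr (Or.inl h1)
            · exact Or.inr (Or.inl h1)
            · exact Or.inr (Or.inr h2)
            · exact Or.inl ⟨h1, h2⟩
          · rintro (⟨h1, h2⟩ | rfl | rfl)
            · exact ⟨Or.inr h1, Or.inr h2⟩
            · exact ⟨Or.inl rfl, Or.inr (G.symm _ _ ha)⟩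
            · exact ⟨Or.inr ha, Or.inl rfl⟩
        · rw [Finset.disjoint_right]
          intro u hu hus
          rw [Finset.mem_inter, mem_nbhd, mem_nbhd] at hus
          rw [Finset.mem_insert, Finset.mem_singleton] at hu
          rcases hu with rfl | rfl
          · exact G.loopless _ hus.1
          · exact G.loopless _ hus.2
        · intro s hs t ht
          rw [Finset.mem_inter, mem_nbhd, mem_nbhd] at hs
          rw [Finset.mem_insert, Finset.mem_singleton] at ht
          rcases ht with rfl | rfl
          · exact G.symm _ _ hs.1
          · exact G.symm _ _ hs.2
        · rw [tCard_fc, if_neg h, if_pos ha, Finset.card_pair h]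
        · rw [epsN_fc, if_neg h, if_pos ha]
          have : (({v 0, v 1} ×ˢ {v 0, v 1} : Finset (G.V × G.V)).filter
              fun p : G.V × G.V => G.adj p.1 p.2) = {(v 0, v 1), (v 1, v 0)} := by
            ext ⟨a, b⟩
            simp only [Finset.mem_filter, Finset.mem_product, Finset.mem_insert,
              Finset.mem_singleton, Prod.mk.injEq]
            constructor
            · rintro ⟨⟨rfl | rfl, rfl | rfl⟩, hab⟩
              · exact absurd hab (G.loopless _)
              · exact Or.inl ⟨rfl, rfl⟩
              · exact Or.inr ⟨rfl, rfl⟩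
              · exact absurd hab (G.loopless _)
            · rintro (⟨rfl, rfl⟩ | ⟨rfl, rfl⟩)
              · exact ⟨⟨Or.inl rfl, Or.inr rfl⟩, ha⟩
              · exact ⟨⟨Or.inr rfl, Or.inl rfl⟩, G.symm _ _ ha⟩
          rw [this, Finset.card_insert_of_notMem (by simp [Prod.ext_iff, h]),
            Finset.card_singleton]
      · refine ⟨∅, ?_, Finset.disjoint_empty_right _, by simp, ?_, ?_⟩
        · rw [Finset.union_empty]
          ext u
          rw [mem_overlap]
          simp only [Finset.mem_inter, mem_nbhd]
          constructor
          · rintro ⟨h1 | h1, h2 | h2⟩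
            · exact absurd (h1.symm.trans h2) h
            · exact absurd (h1 ▸ G.symm _ _ h2) ha
            · exact absurd (h2 ▸ h1) ha
            · exact ⟨h1, h2⟩
          · rintro hu
            exact ⟨Or.inr hu.1, Or.inr hu.2⟩
        · rw [tCard_fc, if_neg h, if_neg ha, Finset.card_empty]
        · rw [epsN_fc, if_neg h, if_neg ha, Finset.empty_product,
            Finset.filter_empty, Finset.card_empty]
  have hset : (@Finset.filter (G.V × G.V)
      (fun p => p.1 ∈ snnOverlapVerts G (v 0) (v 1) ∧
        p.2 ∈ snnOverlapVerts G (v 0) (v 1) ∧ G.adj p.1 p.2)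
      (Classical.decPred _) Finset.univ) =
      ((snnOverlapVerts G (v 0) (v 1) ×ˢ snnOverlapVerts G (v 0) (v 1)).filter
        fun p : G.V × G.V => G.adj p.1 p.2) := by
    ext p
    simp only [Finset.mem_filter, Finset.mem_product, Finset.mem_univ, true_and]
    tauto
  have hcard : (snnOverlapVerts G (v 0) (v 1)).card =
      (G.nbhd (v 0) ∩ G.nbhd (v 1)).card + T.card := by
    rw [hO, Finset.card_union_of_disjoint hdisj]
  have hE : (@Finset.filter (G.V × G.V)
      (fun p => p.1 ∈ snnOverlapVerts G (v 0) (v 1) ∧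
        p.2 ∈ snnOverlapVerts G (v 0) (v 1) ∧ G.adj p.1 p.2)
      (Classical.decPred _) Finset.univ).card =
      aCount (fc G 1 v) + 2 * sCard (fc G 1 v) * tCard (fc G 1 v) + epsN (fc G 1 v) := by
    rw [hset, hO, card_filter_adj_union G _ _ hdisj hadjST, aCount_fc, sCard_fc, htc, hett]
  have hnV : nV (fc G 1 v) = (snnOverlapVerts G (v 0) (v 1)).card := by
    show sCard (fc G 1 v) + tCard (fc G 1 v) = _
    rw [sCard_fc, hcard, htc]
  unfold snnValC snnVal snnEdgeCount
  rw [hE, hnV]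

lemma eta2 {α : Type} (v : Fin 2 → α) : ![v 0, v 1] = v := by
  funext i; fin_cases i <;> rfl

lemma offColor_snn (lam : ℝ) (l : ℕ) {v₁ v₂ : G.V} (h : v₁ ≠ v₂) :
    snnColor G lam l v₁ v₂ = offColor l (snnVal G lam v₁ v₂) := by
  cases l <;> simp [snnColor, offColor, h] <;> rfl

lemma phi_spec (lam : ℝ) : ∀ (l : ℕ) (v : Fin 2 → G.V),
    phi lam l (fc G (l+1) v) = snnColor G lam l (v 0) (v 1) := by
  intro l
  induction l with
  | zero =>
    intro v
    have hcond : eqP0 ((fc G 1 v).1) = (v 0 = v 1) := rfl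
    show (if eqP0 ((fc G 1 v).1) then Sum.inl ((fc G 1 v).1) else
      Sum.inr (snnValC lam (fc G 1 v))) = _
    simp only [hcond]
    by_cases h : v 0 = v 1
    · rw [if_pos h]
      simp only [snnColor]
      rw [eta2]
      exact (ite_cond_eq_true _ _ (eq_true h)).symm
    · rw [if_neg h, snnVal_eq]
      simp only [snnColor]
      exact (ite_cond_eq_false _ _ (eq_false h)).symm
  | succ l ih =>
    intro v
    have hcond : eqP0 (proj0 (l+2) (fc G (l+2) v)) = (v 0 = v 1) := by
      rw [proj0_fc]; rfl
    show (if eqP0 (proj0 (l+2) (fc G (l+2) v)) then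
        Sum.inl (phi lam l (fc G (l+2) v).1,
          ((fc G (l+2) v).2.filter fun ℓ =>
              ℓ[5]?.elim False fun a => eqP0 (proj0 (l+1) a)).map fun ℓ =>
            (ℓ[1]?.elim (offColor l 0) fun a => offColor l (snnValC lam (proj1 l a)),
             ℓ[5]?.elim (offColor l 0) fun a => phi lam l a))
      else Sum.inr (snnValC lam (proj1 (l+1) (fc G (l+2) v)))) = _
    simp only [hcond]
    by_cases h : v 0 = v 1
    · rw [if_pos h]
      simp only [snnColor]
      refine Eq.trans ?_ (ite_cond_eq_true _ _ (eq_true h)).symm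
      have hfst : phi lam l (fc G (l+2) v).1 = snnColor G lam l (v 0) (v 1) := ih v
      rw [hfst]
      refine congrArg _ (congrArg _ ?_)
      -- the multiset part
      have h2 : (fc G (l+2) v).2 = (Fintype.piFinset fun _ : Fin 2 =>
          G.nbhd (v 0) ∩ G.nbhd (v 1)).val.map
            (fun w => (nbhdTuple 2 2 v w).map (fc G (l+1))) := rfl
      rw [h2, Multiset.filter_map, ← Finset.filter_val]
      have hD : ∀ w : Fin 2 → G.V,
          (((fun ℓ => ℓ[5]?.elim False fun a => eqP0 (proj0 (l+1) a)) ∘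
            fun w => (nbhdTuple 2 2 v w).map (fc G (l+1))) w) ↔ w 0 = w 1 := by
        intro w
        show eqP0 (proj0 (l+1)
          (fc G (l+1) (Function.update (Function.update v 1 (w 1)) 0 (w 0)))) ↔ _
        rw [proj0_fc]
        show (Function.update (Function.update v 1 (w 1)) 0 (w 0) 0 =
          Function.update (Function.update v 1 (w 1)) 0 (w 0) 1) ↔ _
        rw [Function.update_self, Function.update_of_ne (show (1 : Fin 2) ≠ 0 by decide),
          Function.update_self]
      have hfilter : Finset.filter
          ((fun ℓ => ℓ[5]?.elim False fun a => eqP0 (proj0 (l+1) a)) ∘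
            fun w => (nbhdTuple 2 2 v w).map (fc G (l+1)))
          (Fintype.piFinset fun _ : Fin 2 => G.nbhd (v 0) ∩ G.nbhd (v 1)) =
          Finset.map ⟨fun x _ => x, fun a b hab => congrFun hab 0⟩
            (G.nbhd (v 0) ∩ G.nbhd (v 1)) := by
        ext w
        simp only [Finset.mem_filter, Fintype.mem_piFinset, Finset.mem_map,
          Function.Embedding.coeFn_mk]
        constructor
        · rintro ⟨hmem, hd⟩
          refine ⟨w 0, hmem 0, ?_⟩
          funext i
          fin_cases i
          · rfl
          · exact (hD w).1 hd
        · rintro ⟨x, hx, rfl⟩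
          exact ⟨fun i => hx, (hD _).2 rfl⟩
      rw [hfilter, Finset.map_val, Multiset.map_map, Multiset.map_map]
      have hSS : G.nbhd (v 0) ∩ G.nbhd (v 1) = G.nbhd (v 0) := by
        rw [← h, Finset.inter_self]
      rw [hSS]
      apply Multiset.map_congr rfl
      intro x hx
      rw [Finset.mem_val, mem_nbhd] at hx
      have hne : v 0 ≠ x := fun hc => G.loopless _ (hc ▸ hx)
      show (offColor l (snnValC lam (proj1 l (fc G (l+1) (Function.update v 1 x)))),
        phi lam l (fc G (l+1) (Function.update (Function.update v 1 x) 0 x))) = _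
      rw [proj1_fc, snnVal_eq, ih]
      have e1 : Function.update v 1 x 0 = v 0 :=
        Function.update_of_ne (show (0 : Fin 2) ≠ 1 by decide) _ _
      have e2 : Function.update v 1 x 1 = x := Function.update_self _ _ _
      have e3 : Function.update (Function.update v 1 x) 0 x 0 = x :=
        Function.update_self _ _ _
      have e4 : Function.update (Function.update v 1 x) 0 x 1 = x := by
        rw [Function.update_of_ne (show (1 : Fin 2) ≠ 0 by decide), Function.update_self]
      rw [e1, e2, e3, e4, ← offColor_snn G lam l hne]
    · rw [if_neg h, proj1_fc, snnVal_eq]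
      simp only [snnColor]
      exact (ite_cond_eq_false _ _ (eq_false h)).symm

lemma hist (lam : ℝ) (l : ℕ) (G : ColoredGraph C) :
    (Finset.univ.val.map fun p : G.V × G.V => snnColor G lam l p.1 p.2) =
    Multiset.map (phi lam l ∘ fun v : Fin 2 → G.V => fc G (l+1) v) Finset.univ.val := by
  have huniv : (Finset.univ : Finset (G.V × G.V)).val =
      (Finset.univ : Finset (Fin 2 → G.V)).val.map (piFinTwoEquiv fun _ => G.V) := by
    rw [← Finset.map_univ_equiv (piFinTwoEquiv fun _ => G.V), Finset.map_val]
    rfl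
  rw [huniv, Multiset.map_map]
  apply Multiset.map_congr rfl
  intro v _
  exact (phi_spec G lam l v).symm

end Stmt13
end Stmt13


/-- For any fixed constant `λ > 0`, the (2,2)-FWL+ instance with
`ES²(v₁,v₂) = (Q₁(v₁) ∩ Q₁(v₂)) × (Q₁(v₁) ∩ Q₁(v₂))` (plain multiset aggregation) is
more powerful than the GraphSNN refinement: equal stable color histograms of the former
imply equal stable GraphSNN color histograms. -/
theorem stmt_13 {C : Type} (lam : ℝ) (hlam : 0 < lam) (G H : ColoredGraph C)
    (hfwl : ∀ l,
      (Finset.univ.val.map fun v : Fin 2 → G.V =>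
        fwlpPlainColor G 2 2 (fun v _ => G.nbhd (v 0) ∩ G.nbhd (v 1)) l v) =
      (Finset.univ.val.map fun v : Fin 2 → H.V =>
        fwlpPlainColor H 2 2 (fun v _ => H.nbhd (v 0) ∩ H.nbhd (v 1)) l v)) :
    ∀ l, (Finset.univ.val.map fun p : G.V × G.V => snnColor G lam l p.1 p.2) =
      (Finset.univ.val.map fun p : H.V × H.V => snnColor H lam l p.1 p.2) := by 
  intro l
  have h := congrArg (Multiset.map (Stmt13.phi lam l)) (hfwl (l+1))
  rw [Multiset.map_map, Multiset.map_map] at h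
  rw [Stmt13.hist lam l G, Stmt13.hist lam l H]
  exact h
end

section
/- Consider the (2,1)-FWL+ instance with equivariant set ES(v₁,v₂) = Q_{SPD(v₁,v₂)}(v₁) ∩ Q_1(v₂) whose initial color of a pair (v₁,v₂) is its isomorphism type together with SPD(v₁,v₂). This instance is at most as powerful as the KP-GNN refinement with the shortest-path-distance kernel and a peripheral subgraph encoder as powerful as 1-WL: for every pair of colored graphs G, H, if the KP-GNN color histograms of G and H are equal, then the color histograms of G and H under this (2,1)-FWL+ instance are equal. -/
/-!
Common formalization of colored graphs, the k-dimensional Weisfeiler-Lehman (WL) test,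
the (k,t)-dimensional Folklore WL test (k,t)-FWL and its extension (k,t)-FWL+, together
with the various specific refinement procedures (δ-k-LWL, GraphSNN, edge-based subgraph
refinement, KP-GNN, GDGNN, SLFWL(2), N²-FWL).

Convention: all colorings are formalized as explicitly-valued nested data (an injective
HASH is the identity).  "The stable colors (resp. color histograms) are equal" is rendered
as "the colors (resp. color histograms) at every iteration l are equal"; since the colors
at iteration l determine those at every earlier iteration and the partitions stabilize on
finite graphs, this is equivalent to equality of the stable colors.
-/

open Finset

/-- Translation from KP-GNN colors to (2,1)-FWL+ colors. -/
def kpToF {C : Type} : ∀ l, KPColor C l → KPFColor C l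
  | 0, c => c
  | l + 1, (c, s) =>
      (kpToF l c, Sum.elim (fun _ => (0 : Multiset (KPFColor C l)))
        (fun m => m.map (kpToF l)) s)

lemma kpToF_kpColor {C : Type} (G : ColoredGraph C) :
    ∀ l (v₁ v₂ : G.V), kpToF l (kpColor G l v₁ v₂) = kpfColor G l v₁ v₂ := by
  intro l
  induction l with
  | zero => intro v₁ v₂; rfl
  | succ l ih =>
      intro v₁ v₂
      show (kpToF l (kpColor G l v₁ v₂), _) = (kpfColor G l v₁ v₂, _)
      by_cases h : v₁ = v₂
      · subst h
        have hempty : (G.sphere (G.toSimple.dist v₁ v₁) v₁ ∩ G.nbhd v₁) = ∅ := by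
          ext w
          simp only [Finset.mem_inter, Finset.notMem_empty, iff_false, not_and]
          intro hw hn
          rw [ColoredGraph.sphere] at hw
          rw [ColoredGraph.nbhd] at hn
          replace hw := (@Finset.mem_filter _ _ (Classical.decPred _) Finset.univ w).mp hw
          replace hn := (@Finset.mem_filter _ _ (Classical.decPred _) Finset.univ w).mp hn
          have : G.toSimple.dist v₁ v₁ = 0 := G.toSimple.dist_self
          rw [this] at hw
          have : v₁ = w := hw.2.1.dist_eq_zero_iff.mp hw.2.2
          exact G.loopless v₁ (this ▸ hn.2)
        have h0 : (G.sphere 0 v₁).val ∩ (G.nbhd v₁).val = 0 := by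
          have := congrArg Finset.val hempty
          simpa using this
        simp [kpColor, kpfColor, ih, hempty, h0]
      · simp [kpColor, kpfColor, ih, h, Multiset.map_map, Function.comp]

/-- The (2,1)-FWL+ instance with
`ES(v₁,v₂) = Q_{SPD(v₁,v₂)}(v₁) ∩ Q₁(v₂)` and initial color the isomorphism type
together with `SPD(v₁,v₂)` is at most as powerful as the KP-GNN refinement: equal stable
KP-GNN color histograms imply equal stable color histograms of this instance. -/
theorem stmt_15 {C : Type} (G H : ColoredGraph C)
    (hkp : ∀ l, (Finset.univ.val.map fun p : G.V × G.V => kpColor G l p.1 p.2) =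
      (Finset.univ.val.map fun p : H.V × H.V => kpColor H l p.1 p.2)) :
    ∀ l, (Finset.univ.val.map fun p : G.V × G.V => kpfColor G l p.1 p.2) =
      (Finset.univ.val.map fun p : H.V × H.V => kpfColor H l p.1 p.2) := by
  intro l
  have h := congrArg (Multiset.map (kpToF l)) (hkp l)
  simpa [Multiset.map_map, Function.comp, kpToF_kpColor] using h
end

section
/- The (2,2)-FWL+ instance with ES²(v₁,v₂) = Q_1(v₂) × SP(v₁,v₂) is more powerful than the GDGNN refinement: for every pair of colored graphs G, H, if the color histograms of G and H under this (2,2)-FWL+ instance are equal, then their GDGNN color histograms are equal. -/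
/-!
Common formalization of colored graphs, the k-dimensional Weisfeiler-Lehman (WL) test,
the (k,t)-dimensional Folklore WL test (k,t)-FWL and its extension (k,t)-FWL+, together
with the various specific refinement procedures (δ-k-LWL, GraphSNN, edge-based subgraph
refinement, KP-GNN, GDGNN, SLFWL(2), N²-FWL).

Convention: all colorings are formalized as explicitly-valued nested data (an injective
HASH is the identity).  "The stable colors (resp. color histograms) are equal" is rendered
as "the colors (resp. color histograms) at every iteration l are equal"; since the colors
at iteration l determine those at every earlier iteration and the partitions stabilize on
finite graphs, this is equivalent to equality of the stable colors.
-/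

open Finset

/-! ### Auxiliary development for Statement 16 -/

noncomputable section Stmt16Aux

open Finset

variable {C : Type}

/-- Pick the common element of a multiset whose elements are all equal (default `d`). -/
def pickC {α : Type _} (d : α) (m : Multiset α) : α :=
  @dite _ (∃ a, a ∈ m ∧ ∀ b ∈ m, b = a) (Classical.dec _) (fun h => h.choose) fun _ => d

theorem pickC_eq {α : Type _} (d : α) {m : Multiset α} {a : α}
    (h1 : a ∈ m) (h2 : ∀ b ∈ m, b = a) : pickC d m = a := by
  have h : ∃ a, a ∈ m ∧ ∀ b ∈ m, b = a := ⟨a, h1, h2⟩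
  rw [pickC, dif_pos h]
  exact h2 _ h.choose_spec.1

theorem pickC_zero {α : Type _} (d : α) : pickC d (0 : Multiset α) = d := by
  rw [pickC, dif_neg]
  rintro ⟨a, ha, -⟩
  simp at ha

theorem eta_two {V : Type _} (v : Fin 2 → V) : ![v 0, v 1] = v := by
  funext i; fin_cases i <;> rfl

theorem nbhdTuple_two {V : Type} (a b : V) (w : Fin 2 → V) :
    nbhdTuple 2 2 ![a, b] w =
      [![a, b], ![a, w 1], ![w 1, b], ![a, w 0], ![w 0, b], ![w 0, w 1]] := by
  rw [show nbhdTuple 2 2 ![a,b] w = [![a,b],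
      Function.update ![a,b] 1 (w 1), Function.update ![a,b] 0 (w 1),
      Function.update ![a,b] 1 (w 0), Function.update ![a,b] 0 (w 0),
      Function.update (Function.update ![a,b] 1 (w 1)) 0 (w 0)] from rfl]
  simp only [List.cons.injEq]
  and_intros <;> first | trivial | (funext i; fin_cases i <;> simp)

theorem hms_two {V α : Type} (S : Fin 2 → Finset V) (x : (Fin 2 → V) → α) :
    (hms 2 S x : Multiset (Multiset α)) =
      (S 1).val.map fun w1 => (S 0).val.map fun w0 => x ![w0, w1] := by
  show ((S (Fin.last 1)).val.map fun wl =>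
      hms 1 (fun i => S i.castSucc) fun w => x (Fin.snoc w wl)) = _
  have h1 : Fin.last 1 = (1 : Fin 2) := rfl
  rw [h1]
  refine Multiset.map_congr rfl fun w1 _ => ?_
  show ((S ((0 : Fin 1).castSucc)).val.map fun w0 =>
      x (Fin.snoc (Fin.snoc finZeroElim w0) w1)) = _
  have h0 : (0 : Fin 1).castSucc = (0 : Fin 2) := rfl
  rw [h0]
  refine Multiset.map_congr rfl fun w0 _ => ?_
  refine congrArg x (funext fun i => ?_)
  fin_cases i <;> simp [Fin.snoc]

theorem filter_map_comm {α β : Type _} (f : α → β) (p : β → Prop) [DecidablePred p]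
    (q : α → Prop) [DecidablePred q] (hq : ∀ a, q a ↔ p (f a)) (s : Multiset α) :
    (s.map f).filter p = (s.filter q).map f := by
  induction s using Multiset.induction with
  | empty => simp
  | cons a s ih =>
      by_cases h : p (f a)
      · rw [Multiset.map_cons, Multiset.filter_cons_of_pos _ h,
          Multiset.filter_cons_of_pos _ ((hq a).2 h), Multiset.map_cons, ih]
      · rw [Multiset.map_cons, Multiset.filter_cons_of_neg _ h,
          Multiset.filter_cons_of_neg _ (fun hc => h ((hq a).1 hc)), ih]

/-- The multiset of values of `f` on pairs, as determined by the two coordinate histograms. -/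
theorem map_univ_pair {V α : Type _} [Fintype V] [DecidableEq V] (f : (Fin 2 → V) → α) :
    (Finset.univ.val.map fun p : V × V => f ![p.1, p.2]) = Finset.univ.val.map f := by
  conv_rhs => rw [← Finset.map_univ_equiv ((finTwoArrowEquiv V).symm)]
  rw [Finset.map_val, Multiset.map_map]
  rfl

theorem filter_diag_map {V α : Type _} [Fintype V] [DecidableEq V] (g : (Fin 2 → V) → α)
    (p : (Fin 2 → V) → Prop) [DecidablePred p] (hp : ∀ v, p v ↔ v 0 = v 1) :
    ((Finset.univ.val.filter p).map g) = Finset.univ.val.map fun a : V => g ![a, a] := by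
  have hinj : Function.Injective (fun a : V => ![a, a]) := by
    intro a b h
    exact congrFun h 0
  have hfil : (Finset.univ.val.filter p) = Finset.univ.val.map fun a : V => ![a, a] := by
    rw [Multiset.Nodup.ext (Multiset.Nodup.filter _ Finset.univ.nodup)
      (Multiset.Nodup.map hinj Finset.univ.nodup)]
    intro v
    rw [Multiset.mem_filter, Multiset.mem_map]
    constructor
    · rintro ⟨-, hv⟩
      have he : v 0 = v 1 := (hp v).1 hv
      refine ⟨v 0, Finset.mem_univ _, ?_⟩
      conv_rhs => rw [← eta_two v]
      rw [← he]
    · rintro ⟨a, -, rfl⟩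
      exact ⟨Finset.mem_univ _, (hp _).2 rfl⟩
  rw [hfil, Multiset.map_map]
  rfl

theorem prod_hist {V α β : Type _} [Fintype V] [DecidableEq V] (f : V → α) (g : V → β) :
    (Finset.univ.val.map fun p : V × V => (f p.1, g p.2)) =
      (Finset.univ.val.map f).bind fun x => (Finset.univ.val.map g).map fun y => (x, y) := by
  rw [show (Finset.univ : Finset (V × V)) = Finset.univ ×ˢ Finset.univ from
    Finset.univ_product_univ.symm, Finset.product_val]
  rw [Multiset.bind_map]
  simp only [SProd.sprod, Multiset.product]
  rw [Multiset.map_bind]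
  refine congrArg _ (funext fun a => ?_)
  rw [Multiset.map_map, Multiset.map_map]
  rfl

/-! #### Color refinement and extraction functions -/

/-- The type of 1-WL (color refinement) colors. -/
def CRC (C : Type) : ℕ → Type
  | 0 => C
  | l + 1 => CRC C l × Multiset (CRC C l)

/-- Color refinement on vertices. -/
def crColor (G : ColoredGraph C) : (l : ℕ) → G.V → CRC C l
  | 0, v => G.color v
  | l + 1, v => (crColor G l v, (G.nbhd v).val.map fun w => crColor G l w)

/-- The GDGNN color of an unreachable pair as a function of the first color and the
color-refinement color of the second vertex. -/
def PhiGD : (l : ℕ) → C → CRC C l → GDColor C l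
  | 0, c, d => (![c, d], fun i j => i = j, fun _ _ => False)
  | l + 1, c, d => (PhiGD l c d.1, d.2.map fun x => PhiGD l c x, 0)

/-- Extract the isomorphism type from an FWL+ color. -/
def isoOfF : (l : ℕ) → FWLColor C 2 2 l → IsoType C 2
  | 0, c => c
  | l + 1, c => isoOfF l c.1

/-- Extract the color-refinement color of the second vertex from an FWL+ color. -/
def crOfF : (l : ℕ) → FWLColor C 2 2 l → CRC C l
  | 0, c => c.1 1
  | l + 1, c =>
      (crOfF l c.1,
        pickC 0 ((c.2 : Multiset (Multiset (List (FWLColor C 2 2 l)))).map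
          fun inner => inner.map fun L => crOfF l (L.getD 3 c.1)))

/-- Extract the GDGNN color from an FWL+ color. -/
def gdOfF : (l : ℕ) → FWLColor C 2 2 l → GDColor C l
  | 0, c => c
  | l + 1, c =>
      (gdOfF l c.1,
        pickC 0 ((c.2 : Multiset (Multiset (List (FWLColor C 2 2 l)))).map
          fun inner => inner.map fun L => gdOfF l (L.getD 3 c.1)),
        (c.2 : Multiset (Multiset (List (FWLColor C 2 2 l)))).map
          fun inner => gdOfF l (pickC c.1 (inner.map fun L => L.getD 1 c.1)))

/-! #### Graph lemmas -/

/-- The equivariant set of the (2,2)-FWL+ instance under consideration. -/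
def esGD (G : ColoredGraph C) : (Fin 2 → G.V) → Fin 2 → Finset G.V :=
  fun v => ![G.nbhd (v 1), G.spSet (v 0) (v 1)]

/-- The (2,2)-FWL+ coloring under consideration. -/
def fcGD (G : ColoredGraph C) (l : ℕ) (v : Fin 2 → G.V) : FWLColor C 2 2 l :=
  fwlpColor G 2 2 (esGD G) l v

/-- `a` and `b` lie in a common connected component (or are equal). -/
def RQ (G : ColoredGraph C) (a b : G.V) : Prop :=
  a = b ∨ G.toSimple.Reachable a b

theorem mem_filter' {α : Type _} {p : α → Prop} {i : DecidablePred p} {s : Finset α} {a : α} :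
    a ∈ @Finset.filter _ p i s ↔ a ∈ s ∧ p a := Finset.mem_filter

theorem mem_nbhd {G : ColoredGraph C} {v w : G.V} : w ∈ G.nbhd v ↔ G.adj v w := by
  unfold ColoredGraph.nbhd
  rw [mem_filter']
  simp

theorem spSet_self (G : ColoredGraph C) (a : G.V) : G.spSet a a = {a} := by
  rw [ColoredGraph.spSet, if_pos rfl]

theorem mem_spSet_of_ne {G : ColoredGraph C} {a b w : G.V} (h : a ≠ b) :
    w ∈ G.spSet a b ↔ G.toSimple.Reachable a w ∧ G.toSimple.Reachable w b ∧
      G.toSimple.dist a w + G.toSimple.dist w b = G.toSimple.dist a b := by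
  rw [ColoredGraph.spSet, if_neg h, mem_filter']
  simp

theorem self_mem_spSet {G : ColoredGraph C} {a b : G.V} (h : RQ G a b) :
    a ∈ G.spSet a b := by
  rcases h with rfl | h
  · rw [spSet_self]; exact Finset.mem_singleton_self a
  · rcases eq_or_ne a b with rfl | hne
    · rw [spSet_self]; exact Finset.mem_singleton_self a
    · rw [mem_spSet_of_ne hne]
      exact ⟨SimpleGraph.Reachable.refl a, h, by rw [SimpleGraph.dist_self, Nat.zero_add]⟩

theorem spSet_eq_empty {G : ColoredGraph C} {a b : G.V} (h : ¬ RQ G a b) :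
    G.spSet a b = ∅ := by
  have hne : a ≠ b := fun he => h (Or.inl he)
  rw [Finset.eq_empty_iff_forall_notMem]
  intro w hw
  rw [mem_spSet_of_ne hne] at hw
  exact h (Or.inr (hw.1.trans hw.2.1))

theorem RQ_of_mem_spSet {G : ColoredGraph C} {a b w : G.V} (hab : RQ G a b)
    (hw : w ∈ G.spSet a b) : RQ G a w := by
  rcases eq_or_ne a b with rfl | hne
  · rw [spSet_self, Finset.mem_singleton] at hw
    exact Or.inl hw.symm
  · rw [mem_spSet_of_ne hne] at hw
    exact Or.inr hw.1

theorem RQ_of_mem_nbhd {G : ColoredGraph C} {a b w : G.V} (hab : RQ G a b)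
    (hw : w ∈ G.nbhd b) : RQ G a w := by
  have hadj : G.toSimple.Adj b w := mem_nbhd.1 hw
  rcases hab with rfl | h
  · exact Or.inr hadj.reachable
  · exact Or.inr (h.trans hadj.reachable)

theorem not_RQ_of_mem_nbhd {G : ColoredGraph C} {a b w : G.V} (hab : ¬ RQ G a b)
    (hw : w ∈ G.nbhd b) : ¬ RQ G a w := by
  have hadj : G.toSimple.Adj b w := mem_nbhd.1 hw
  rintro (rfl | h)
  · exact hab (Or.inr hadj.symm.reachable)
  · exact hab (Or.inr (h.trans hadj.symm.reachable))

theorem eq_of_nbhd_empty {G : ColoredGraph C} {a b : G.V} (hab : RQ G a b)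
    (h : (G.nbhd b).val = 0) : a = b := by
  rcases hab with rfl | hr
  · rfl
  · by_contra hne
    obtain ⟨p⟩ := hr.symm
    cases p with
    | nil => exact hne rfl
    | @cons _ x _ hadj q =>
        have : x ∈ G.nbhd b := mem_nbhd.2 hadj
        rw [Finset.val_eq_zero] at h
        rw [h] at this
        exact absurd this (Finset.notMem_empty x)

/-! #### Unfolding the FWL+ coloring -/

theorem fcGD_fst (G : ColoredGraph C) (l : ℕ) (v : Fin 2 → G.V) :
    (fcGD G (l + 1) v).1 = fcGD G l v := rfl

theorem fcGD_snd (G : ColoredGraph C) (l : ℕ) (a b : G.V) :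
    ((fcGD G (l + 1) ![a, b]).2 : Multiset (Multiset (List (FWLColor C 2 2 l)))) =
      (G.spSet a b).val.map fun w1 => (G.nbhd b).val.map fun w0 =>
        [fcGD G l ![a, b], fcGD G l ![a, w1], fcGD G l ![w1, b],
          fcGD G l ![a, w0], fcGD G l ![w0, b], fcGD G l ![w0, w1]] := by
  show (hms 2 (esGD G ![a, b]) fun w =>
      (nbhdTuple 2 2 ![a, b] w).map fun u => fcGD G l u : Multiset (Multiset _)) = _
  rw [hms_two]
  have h1 : esGD G ![a, b] 1 = G.spSet a b := rfl
  have h0 : esGD G ![a, b] 0 = G.nbhd b := rfl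
  rw [h1, h0]
  refine Multiset.map_congr rfl fun w1 _ => ?_
  refine Multiset.map_congr rfl fun w0 _ => ?_
  rw [nbhdTuple_two a b ![w0, w1]]
  rfl

theorem fc_snd_zero_iff (G : ColoredGraph C) (l : ℕ) (a b : G.V) :
    (((fcGD G (l + 1) ![a, b]).2 : Multiset (Multiset (List (FWLColor C 2 2 l)))) =
        (0 : Multiset (Multiset (List (FWLColor C 2 2 l))))) ↔
      ¬ RQ G a b := by
  rw [fcGD_snd]
  erw [Multiset.map_eq_zero, Finset.val_eq_zero]
  constructor
  · intro h hab
    have := self_mem_spSet hab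
    rw [h] at this
    exact absurd this (Finset.notMem_empty a)
  · exact spSet_eq_empty

/-! #### Correctness of the extraction functions on reachable pairs -/

theorem isoOfF_fc (G : ColoredGraph C) : ∀ (l : ℕ) (v : Fin 2 → G.V),
    isoOfF l (fcGD G l v) = G.isoType v
  | 0, _ => rfl
  | l + 1, v => isoOfF_fc G l v

theorem crOfF_fc (G : ColoredGraph C) : ∀ (l : ℕ) (a b : G.V), RQ G a b →
    crOfF l (fcGD G l ![a, b]) = crColor G l b := by
  intro l
  induction l with
  | zero => intro a b _; rfl
  | succ l ih =>
    intro a b hab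
    show (crOfF l (fcGD G (l + 1) ![a, b]).1,
        pickC 0 (((fcGD G (l + 1) ![a, b]).2 :
            Multiset (Multiset (List (FWLColor C 2 2 l)))).map
          fun inner => inner.map fun L => crOfF l (L.getD 3 (fcGD G (l + 1) ![a, b]).1))) =
      (crColor G l b, (G.nbhd b).val.map fun w => crColor G l w)
    rw [fcGD_fst, fcGD_snd]
    have hT : ∀ w1 : G.V,
        ((G.nbhd b).val.map fun w0 =>
            [fcGD G l ![a, b], fcGD G l ![a, w1], fcGD G l ![w1, b],
              fcGD G l ![a, w0], fcGD G l ![w0, b], fcGD G l ![w0, w1]]).map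
          (fun L => crOfF l (L.getD 3 (fcGD G l ![a, b]))) =
        (G.nbhd b).val.map fun w => crColor G l w := by
      intro w1
      rw [Multiset.map_map]
      refine Multiset.map_congr rfl fun w0 hw0 => ?_
      show crOfF l (fcGD G l ![a, w0]) = crColor G l w0
      exact ih a w0 (RQ_of_mem_nbhd hab hw0)
    refine congrArg₂ Prod.mk (ih a b hab) ?_
    erw [Multiset.map_map]
    refine pickC_eq _ ?_ ?_
    · exact Multiset.mem_map.2 ⟨a, Finset.mem_def.1 (self_mem_spSet hab), hT a⟩
    · rintro x hx
      obtain ⟨w1, _, rfl⟩ := Multiset.mem_map.1 hx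
      exact hT w1

theorem gdOfF_fc (G : ColoredGraph C) : ∀ (l : ℕ) (a b : G.V), RQ G a b →
    gdOfF l (fcGD G l ![a, b]) = gdColor G l a b := by
  intro l
  induction l with
  | zero => intro a b _; rfl
  | succ l ih =>
    intro a b hab
    show (gdOfF l (fcGD G (l + 1) ![a, b]).1,
        pickC 0 (((fcGD G (l + 1) ![a, b]).2 :
            Multiset (Multiset (List (FWLColor C 2 2 l)))).map
          fun inner => inner.map fun L => gdOfF l (L.getD 3 (fcGD G (l + 1) ![a, b]).1)),
        ((fcGD G (l + 1) ![a, b]).2 : Multiset (Multiset (List (FWLColor C 2 2 l)))).map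
          fun inner => gdOfF l (pickC (fcGD G (l + 1) ![a, b]).1
            (inner.map fun L => L.getD 1 (fcGD G (l + 1) ![a, b]).1))) =
      (gdColor G l a b,
        (G.nbhd b).val.map fun w => gdColor G l a w,
        (G.spSet a b).val.map fun w => gdColor G l a w)
    rw [fcGD_fst, fcGD_snd]
    have hT : ∀ w1 : G.V,
        ((G.nbhd b).val.map fun w0 =>
            [fcGD G l ![a, b], fcGD G l ![a, w1], fcGD G l ![w1, b],
              fcGD G l ![a, w0], fcGD G l ![w0, b], fcGD G l ![w0, w1]]).map
          (fun L => gdOfF l (L.getD 3 (fcGD G l ![a, b]))) =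
        (G.nbhd b).val.map fun w => gdColor G l a w := by
      intro w1
      rw [Multiset.map_map]
      refine Multiset.map_congr rfl fun w0 hw0 => ?_
      show gdOfF l (fcGD G l ![a, w0]) = gdColor G l a w0
      exact ih a w0 (RQ_of_mem_nbhd hab hw0)
    refine congrArg₂ Prod.mk (ih a b hab) (congrArg₂ Prod.mk ?_ ?_)
    · erw [Multiset.map_map]
      refine pickC_eq _ ?_ ?_
      · exact Multiset.mem_map.2 ⟨a, Finset.mem_def.1 (self_mem_spSet hab), hT a⟩
      · rintro x hx
        obtain ⟨w1, _, rfl⟩ := Multiset.mem_map.1 hx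
        exact hT w1
    · erw [Multiset.map_map]
      refine Multiset.map_congr rfl fun w1 hw1 => ?_
      show gdOfF l (pickC (fcGD G l ![a, b])
          (((G.nbhd b).val.map fun w0 =>
            [fcGD G l ![a, b], fcGD G l ![a, w1], fcGD G l ![w1, b],
              fcGD G l ![a, w0], fcGD G l ![w0, b], fcGD G l ![w0, w1]]).map
            fun L => L.getD 1 (fcGD G l ![a, b]))) = gdColor G l a w1
      rw [Multiset.map_map]
      have hRQw1 : RQ G a w1 := RQ_of_mem_spSet hab (Finset.mem_def.2 hw1)
      rcases eq_or_ne ((G.nbhd b).val) 0 with h0 | h0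
      · rw [h0]
        have hab' : a = b := eq_of_nbhd_empty hab h0
        subst hab'
        have hw1a : w1 = a := by
          have := Finset.mem_def.2 hw1
          rw [spSet_self, Finset.mem_singleton] at this
          exact this
        subst hw1a
        show gdOfF l (pickC (fcGD G l ![w1, w1]) 0) = gdColor G l w1 w1
        rw [pickC_zero]
        exact ih w1 w1 (Or.inl rfl)
      · obtain ⟨w0, hw0⟩ := Multiset.exists_mem_of_ne_zero h0
        have hpk : pickC (fcGD G l ![a, b])
            ((G.nbhd b).val.map ((fun L => L.getD 1 (fcGD G l ![a, b])) ∘ fun w0 =>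
              [fcGD G l ![a, b], fcGD G l ![a, w1], fcGD G l ![w1, b],
                fcGD G l ![a, w0], fcGD G l ![w0, b], fcGD G l ![w0, w1]])) =
            fcGD G l ![a, w1] := by
          refine pickC_eq _ ?_ ?_
          · exact Multiset.mem_map.2 ⟨w0, hw0, rfl⟩
          · rintro x hx
            obtain ⟨w0', _, rfl⟩ := Multiset.mem_map.1 hx
            rfl
        rw [hpk]
        exact ih a w1 hRQw1

theorem gd_unreach (G : ColoredGraph C) : ∀ (l : ℕ) (a b : G.V), ¬ RQ G a b →
    gdColor G l a b = PhiGD l (G.color a) (crColor G l b) := by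
  intro l
  induction l with
  | zero =>
    intro a b hab
    have hne : a ≠ b := fun he => hab (Or.inl he)
    have nab : ¬ G.adj a b := fun h =>
      hab (Or.inr (SimpleGraph.Adj.reachable (show G.toSimple.Adj a b from h)))
    have nba : ¬ G.adj b a := fun h => nab (G.symm _ _ h)
    have naa : ¬ G.adj a a := G.loopless a
    have nbb : ¬ G.adj b b := G.loopless b
    show (fun i => G.color (![a, b] i), fun i j => ![a, b] i = ![a, b] j,
        fun i j => G.adj (![a, b] i) (![a, b] j)) =
      (![G.color a, G.color b], fun i j => i = j, fun _ _ => False)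
    refine congrArg₂ Prod.mk ?_ (congrArg₂ Prod.mk ?_ ?_)
    · funext i; fin_cases i <;> rfl
    · funext i j
      fin_cases i <;> fin_cases j <;>
        simp [hne, hne.symm, Fin.ext_iff]
    · funext i j
      fin_cases i <;> fin_cases j <;>
        simp [naa, nab, nba, nbb]
  | succ l ih =>
    intro a b hab
    show (gdColor G l a b,
        (G.nbhd b).val.map fun w => gdColor G l a w,
        (G.spSet a b).val.map fun w => gdColor G l a w) =
      (PhiGD l (G.color a) (crColor G l b),
        ((G.nbhd b).val.map fun w => crColor G l w).map fun x => PhiGD l (G.color a) x, 0)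
    refine congrArg₂ Prod.mk (ih a b hab) (congrArg₂ Prod.mk ?_ ?_)
    · rw [Multiset.map_map]
      refine Multiset.map_congr rfl fun w hw => ?_
      exact ih a w (not_RQ_of_mem_nbhd hab (Finset.mem_def.2 hw))
    · rw [spSet_eq_empty hab]
      rfl

/-! #### The histogram transformation -/

/-- Reachability of the underlying pair, read off from an FWL+ color. -/
def PGD (l : ℕ) (c : FWLColor C 2 2 (l + 1)) : Prop :=
  ¬ ((c.2 : Multiset (Multiset (List (FWLColor C 2 2 l)))) =
      (0 : Multiset (Multiset (List (FWLColor C 2 2 l)))))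

/-- Diagonality of the underlying pair, read off from an FWL+ color. -/
def DGD (l : ℕ) (c : FWLColor C 2 2 (l + 1)) : Prop :=
  (isoOfF (l + 1) c).2.1 0 1

/-- The first color and the color-refinement color of the second vertex, read off from
an FWL+ color. -/
def pairOfF (l : ℕ) (c : FWLColor C 2 2 (l + 1)) : C × CRC C (l + 1) :=
  ((isoOfF (l + 1) c).1 0, crOfF (l + 1) c)

/-- Multiset subtraction without a decidability assumption. -/
def msub {α : Type _} (s t : Multiset α) : Multiset α :=
  letI := Classical.decEq α
  s - t

theorem msub_cancel {α : Type _} (s t : Multiset α) : msub (s + t) s = t := by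
  letI := Classical.decEq α
  show s + t - s = t
  refine Multiset.ext.2 fun x => ?_
  rw [Multiset.count_sub, Multiset.count_add]
  exact Nat.add_sub_cancel_left _ _

theorem filter_split {α : Type _} (p : α → Prop) (s : Multiset α) :
    @Multiset.filter _ p (Classical.decPred _) s +
      @Multiset.filter _ (fun a => ¬ p a) (Classical.decPred _) s = s := by
  induction s using Multiset.induction with
  | empty => rfl
  | cons a s ih =>
    by_cases h : p a
    · rw [@Multiset.filter_cons_of_pos _ p (Classical.decPred _) a s h,
        @Multiset.filter_cons_of_neg _ (fun a => ¬ p a) (Classical.decPred _) a s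
          (not_not_intro h),
        Multiset.cons_add, ih]
    · rw [@Multiset.filter_cons_of_neg _ p (Classical.decPred _) a s h,
        @Multiset.filter_cons_of_pos _ (fun a => ¬ p a) (Classical.decPred _) a s h,
        Multiset.add_cons, ih]

/-- The GDGNN color histogram as a function of the FWL+ color histogram. -/
def thetaGD (l : ℕ) (h : Multiset (FWLColor C 2 2 (l + 1))) : Multiset (GDColor C (l + 1)) :=
  (@Multiset.filter _ (PGD l) (Classical.decPred _) h).map (gdOfF (l + 1)) +
    (msub ((((@Multiset.filter _ (DGD l) (Classical.decPred _) h).map (pairOfF l)).map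
          Prod.fst).bind
        fun x => (((@Multiset.filter _ (DGD l) (Classical.decPred _) h).map
            (pairOfF l)).map Prod.snd).map fun y => (x, y))
      ((@Multiset.filter _ (PGD l) (Classical.decPred _) h).map (pairOfF l))).map
      fun q => PhiGD (l + 1) q.1 q.2

theorem gd_hist_eq_theta (G : ColoredGraph C) (l : ℕ) :
    (Finset.univ.val.map fun p : G.V × G.V => gdColor G (l + 1) p.1 p.2) =
      thetaGD l (Finset.univ.val.map fun v : Fin 2 → G.V => fcGD G (l + 1) v) := by
  have eQ : ∀ v : Fin 2 → G.V, RQ G (v 0) (v 1) ↔ PGD l (fcGD G (l + 1) v) := by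
    intro v
    have hiff := fc_snd_zero_iff G l (v 0) (v 1)
    rw [show (![v 0, v 1] : Fin 2 → G.V) = v from eta_two v] at hiff
    exact Iff.symm ((not_iff_not.2 hiff).trans not_not)
  have eD : ∀ v : Fin 2 → G.V, (v 0 = v 1) ↔ DGD l (fcGD G (l + 1) v) := by
    intro v
    show (v 0 = v 1) ↔ (isoOfF (l + 1) (fcGD G (l + 1) v)).2.1 0 1
    rw [isoOfF_fc]
    exact Iff.rfl
  have ePair : ∀ v : Fin 2 → G.V, RQ G (v 0) (v 1) →
      pairOfF l (fcGD G (l + 1) v) = (G.color (v 0), crColor G (l + 1) (v 1)) := by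
    intro v hv
    have hveq : fcGD G (l + 1) v = fcGD G (l + 1) ![v 0, v 1] := by rw [eta_two]
    show ((isoOfF (l + 1) (fcGD G (l + 1) v)).1 0, crOfF (l + 1) (fcGD G (l + 1) v)) = _
    rw [hveq, isoOfF_fc, crOfF_fc G (l + 1) (v 0) (v 1) hv]
    rfl
  have eGd : ∀ v : Fin 2 → G.V, RQ G (v 0) (v 1) →
      gdOfF (l + 1) (fcGD G (l + 1) v) = gdColor G (l + 1) (v 0) (v 1) := by
    intro v hv
    have hveq : fcGD G (l + 1) v = fcGD G (l + 1) ![v 0, v 1] := by rw [eta_two]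
    rw [hveq]
    exact gdOfF_fc G (l + 1) (v 0) (v 1) hv
  have h1 : (Finset.univ.val.map fun p : G.V × G.V => gdColor G (l + 1) p.1 p.2) =
      Finset.univ.val.map fun v : Fin 2 → G.V => gdColor G (l + 1) (v 0) (v 1) :=
    map_univ_pair fun v : Fin 2 → G.V => gdColor G (l + 1) (v 0) (v 1)
  rw [h1]
  unfold thetaGD
  have hA : (@Multiset.filter _ (PGD l) (Classical.decPred _)
        (Finset.univ.val.map fun v : Fin 2 → G.V => fcGD G (l + 1) v)).map (gdOfF (l + 1)) =
      (@Multiset.filter _ (fun v : Fin 2 → G.V => RQ G (v 0) (v 1)) (Classical.decPred _)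
        Finset.univ.val).map fun v => gdColor G (l + 1) (v 0) (v 1) := by
    rw [@filter_map_comm _ _ (fun v : Fin 2 → G.V => fcGD G (l + 1) v) (PGD l)
      (Classical.decPred _) (fun v : Fin 2 → G.V => RQ G (v 0) (v 1)) (Classical.decPred _)
      eQ Finset.univ.val]
    rw [Multiset.map_map]
    refine Multiset.map_congr rfl fun v hv => ?_
    have hrv : RQ G (v 0) (v 1) := @Multiset.of_mem_filter _
      (fun v : Fin 2 → G.V => RQ G (v 0) (v 1)) (Classical.decPred _) v Finset.univ.val hv
    exact eGd v hrv
  have hdiag : (@Multiset.filter _ (DGD l) (Classical.decPred _)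
        (Finset.univ.val.map fun v : Fin 2 → G.V => fcGD G (l + 1) v)).map (pairOfF l) =
      Finset.univ.val.map fun a : G.V => (G.color a, crColor G (l + 1) a) := by
    rw [@filter_map_comm _ _ (fun v : Fin 2 → G.V => fcGD G (l + 1) v) (DGD l)
      (Classical.decPred _) (fun v : Fin 2 → G.V => v 0 = v 1) (Classical.decPred _)
      eD Finset.univ.val]
    rw [Multiset.map_map]
    rw [@filter_diag_map G.V _ _ _ _ (fun v : Fin 2 → G.V => v 0 = v 1) (Classical.decPred _)
      (fun v => Iff.rfl)]
    refine Multiset.map_congr rfl fun a _ => ?_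
    exact ePair ![a, a] (Or.inl rfl)
  have hreachpairs : (@Multiset.filter _ (PGD l) (Classical.decPred _)
        (Finset.univ.val.map fun v : Fin 2 → G.V => fcGD G (l + 1) v)).map (pairOfF l) =
      (@Multiset.filter _ (fun v : Fin 2 → G.V => RQ G (v 0) (v 1)) (Classical.decPred _)
        Finset.univ.val).map fun v => (G.color (v 0), crColor G (l + 1) (v 1)) := by
    rw [@filter_map_comm _ _ (fun v : Fin 2 → G.V => fcGD G (l + 1) v) (PGD l)
      (Classical.decPred _) (fun v : Fin 2 → G.V => RQ G (v 0) (v 1)) (Classical.decPred _)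
      eQ Finset.univ.val]
    rw [Multiset.map_map]
    refine Multiset.map_congr rfl fun v hv => ?_
    have hrv : RQ G (v 0) (v 1) := @Multiset.of_mem_filter _
      (fun v : Fin 2 → G.V => RQ G (v 0) (v 1)) (Classical.decPred _) v Finset.univ.val hv
    exact ePair v hrv
  have htotal : ((Finset.univ.val.map fun a : G.V => (G.color a, crColor G (l + 1) a)).map
          Prod.fst).bind
        (fun x => ((Finset.univ.val.map fun a : G.V =>
            (G.color a, crColor G (l + 1) a)).map Prod.snd).map fun y => (x, y)) =
      Finset.univ.val.map fun v : Fin 2 → G.V => (G.color (v 0), crColor G (l + 1) (v 1)) := by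
    rw [Multiset.map_map, Multiset.map_map]
    have e1 : (Prod.fst ∘ fun a : G.V => (G.color a, crColor G (l + 1) a)) = G.color := rfl
    have e2 : (Prod.snd ∘ fun a : G.V => (G.color a, crColor G (l + 1) a)) =
      crColor G (l + 1) := rfl
    rw [e1, e2]
    have hp := prod_hist (V := G.V) G.color (crColor G (l + 1))
    rw [← hp]
    exact map_univ_pair fun v : Fin 2 → G.V => (G.color (v 0), crColor G (l + 1) (v 1))
  rw [hA, hdiag, hreachpairs, htotal]
  have hsplit : @Multiset.filter _ (fun v : Fin 2 → G.V => RQ G (v 0) (v 1))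
        (Classical.decPred _) Finset.univ.val +
      @Multiset.filter _ (fun v : Fin 2 → G.V => ¬ RQ G (v 0) (v 1))
        (Classical.decPred _) Finset.univ.val = Finset.univ.val :=
    filter_split _ _
  have hsub : msub (Finset.univ.val.map fun v : Fin 2 → G.V =>
        (G.color (v 0), crColor G (l + 1) (v 1)))
      ((@Multiset.filter _ (fun v : Fin 2 → G.V => RQ G (v 0) (v 1)) (Classical.decPred _)
        Finset.univ.val).map fun v => (G.color (v 0), crColor G (l + 1) (v 1))) =
      (@Multiset.filter _ (fun v : Fin 2 → G.V => ¬ RQ G (v 0) (v 1)) (Classical.decPred _)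
        Finset.univ.val).map fun v => (G.color (v 0), crColor G (l + 1) (v 1)) := by
    have hXsplit : (Finset.univ.val.map fun v : Fin 2 → G.V =>
          (G.color (v 0), crColor G (l + 1) (v 1))) =
        ((@Multiset.filter _ (fun v : Fin 2 → G.V => RQ G (v 0) (v 1)) (Classical.decPred _)
          Finset.univ.val).map fun v => (G.color (v 0), crColor G (l + 1) (v 1))) +
        ((@Multiset.filter _ (fun v : Fin 2 → G.V => ¬ RQ G (v 0) (v 1)) (Classical.decPred _)
          Finset.univ.val).map fun v => (G.color (v 0), crColor G (l + 1) (v 1))) := by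
      conv_lhs => rw [← hsplit]
      rw [Multiset.map_add]
    rw [hXsplit]
    exact msub_cancel _ _
  rw [hsub]
  have hB : ((@Multiset.filter _ (fun v : Fin 2 → G.V => ¬ RQ G (v 0) (v 1))
        (Classical.decPred _) Finset.univ.val).map fun v =>
          (G.color (v 0), crColor G (l + 1) (v 1))).map (fun q => PhiGD (l + 1) q.1 q.2) =
      (@Multiset.filter _ (fun v : Fin 2 → G.V => ¬ RQ G (v 0) (v 1)) (Classical.decPred _)
        Finset.univ.val).map fun v => gdColor G (l + 1) (v 0) (v 1) := by
    rw [Multiset.map_map]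
    refine Multiset.map_congr rfl fun v hv => ?_
    have hnv : ¬ RQ G (v 0) (v 1) := @Multiset.of_mem_filter _
      (fun v : Fin 2 → G.V => ¬ RQ G (v 0) (v 1)) (Classical.decPred _) v Finset.univ.val hv
    exact (gd_unreach G (l + 1) (v 0) (v 1) hnv).symm
  rw [hB]
  conv_lhs => rw [← hsplit]
  rw [Multiset.map_add]

end Stmt16Aux
/-- The (2,2)-FWL+ instance with `ES²(v₁,v₂) = Q₁(v₂) × SP(v₁,v₂)` is
more powerful than the GDGNN refinement: equal stable color histograms of the former
imply equal stable GDGNN color histograms. -/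
theorem stmt_16 {C : Type} (G H : ColoredGraph C)
    (hfwl : ∀ l,
      (Finset.univ.val.map fun v : Fin 2 → G.V =>
        fwlpColor G 2 2 (fun v => ![G.nbhd (v 1), G.spSet (v 0) (v 1)]) l v) =
      (Finset.univ.val.map fun v : Fin 2 → H.V =>
        fwlpColor H 2 2 (fun v => ![H.nbhd (v 1), H.spSet (v 0) (v 1)]) l v)) :
    ∀ l, (Finset.univ.val.map fun p : G.V × G.V => gdColor G l p.1 p.2) =
      (Finset.univ.val.map fun p : H.V × H.V => gdColor H l p.1 p.2) := by
  intro l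
  cases l with
  | zero =>
    have h1 : (Finset.univ.val.map fun p : G.V × G.V => gdColor G 0 p.1 p.2) =
        Finset.univ.val.map fun v : Fin 2 → G.V => fcGD G 0 v :=
      map_univ_pair fun v : Fin 2 → G.V => fcGD G 0 v
    have h2 : (Finset.univ.val.map fun p : H.V × H.V => gdColor H 0 p.1 p.2) =
        Finset.univ.val.map fun v : Fin 2 → H.V => fcGD H 0 v :=
      map_univ_pair fun v : Fin 2 → H.V => fcGD H 0 v
    rw [h1, h2]
    exact hfwl 0
  | succ l =>
    rw [gd_hist_eq_theta G l, gd_hist_eq_theta H l]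
    exact congrArg (thetaGD l) (hfwl (l + 1))
end
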